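/- arXiv:2412.00717 — 7 statements merged into one kernel-verified Lean document; each statement's English description precedes it below -/
import Mathlib

section
/- Let X ~ Bin(n,p) be a binomial random variable and t a natural number. Then Pr[X ≥ 2t] ≤ (Pr[X ≥ t])^2. -/
/-- Probability mass function of a Binomial(n, p) random variable at value `j`. -/
def binomPMF (n : ℕ) (p : ℝ) (j : ℕ) : ℝ :=
  (n.choose j : ℝ) * p ^ j * (1 - p) ^ (n - j)

/-- Tail probability `Pr[X ≥ t]` for `X ~ Bin(n, p)`. -/
def binomTail (n : ℕ) (p : ℝ) (t : ℕ) : ℝ :=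
  ∑ j ∈ Finset.Icc t n, binomPMF n p j

/-!
Write `T_n(s) = Pr[Bin(n, p) ≥ s]`. Conditioning on the first trial gives
`T_{n+1}(s+1) = p T_n(s) + (1-p) T_n(s+1)`, and along this recursion the stronger
submultiplicativity `T_n(a + b) ≤ T_n(a) T_n(b)` propagates by induction on `n`: writing the
weights as `p = p² + p(1-p)` and `1-p = p(1-p) + (1-p)²`, each of the four terms of the expanded
product dominates one term on the left, by the induction hypothesis and the antitonicity of `T_n`
in `s`.
-/

open Finset

section
variable {p : ℝ}

lemma binomPMF_nonneg (hp0 : 0 ≤ p) (hp1 : p ≤ 1) (n j : ℕ) : 0 ≤ binomPMF n p j := by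
  have : 0 ≤ 1 - p := sub_nonneg.2 hp1
  unfold binomPMF
  positivity

lemma binomPMF_eq_zero_of_lt {n j : ℕ} (h : n < j) : binomPMF n p j = 0 := by
  simp [binomPMF, Nat.choose_eq_zero_of_lt h]

lemma binomPMF_succ_succ (n j : ℕ) :
    binomPMF (n + 1) p (j + 1) = p * binomPMF n p j + (1 - p) * binomPMF n p (j + 1) := by
  simp only [binomPMF, Nat.choose_succ_succ, Nat.cast_add, Nat.add_sub_add_right]
  rcases lt_or_ge j n with hj | hj
  · rw [show n - j = n - (j + 1) + 1 by omega]
    ring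
  · rw [Nat.choose_eq_zero_of_lt (by omega : n < j + 1)]
    ring

lemma binomTail_nonneg (hp0 : 0 ≤ p) (hp1 : p ≤ 1) (n t : ℕ) : 0 ≤ binomTail n p t :=
  sum_nonneg fun j _ => binomPMF_nonneg hp0 hp1 n j

lemma binomTail_antitone (hp0 : 0 ≤ p) (hp1 : p ≤ 1) (n : ℕ) : Antitone (binomTail n p) :=
  fun _ _ hst => sum_le_sum_of_subset_of_nonneg (Icc_subset_Icc_left hst)
    fun j _ _ => binomPMF_nonneg hp0 hp1 n j

lemma binomTail_zero_right (n : ℕ) : binomTail n p 0 = 1 := by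
  calc binomTail n p 0 = (p + (1 - p)) ^ n := by
        rw [binomTail, ← Nat.range_succ_eq_Icc_zero, add_pow]
        exact sum_congr rfl fun j _ => by rw [binomPMF]; ring
    _ = 1 := by rw [add_sub_cancel, one_pow]

lemma binomTail_zero_succ (t : ℕ) : binomTail 0 p (t + 1) = 0 := by
  simp [binomTail]

lemma binomTail_succ_succ (n t : ℕ) :
    binomTail (n + 1) p (t + 1) = p * binomTail n p t + (1 - p) * binomTail n p (t + 1) := by
  have hshift : binomTail (n + 1) p (t + 1) = ∑ j ∈ Icc t n, binomPMF (n + 1) p (j + 1) := by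
    rw [binomTail, ← map_add_right_Icc t n 1, sum_map]
    rfl
  have hextend : ∑ j ∈ Icc t n, binomPMF n p (j + 1) = binomTail n p (t + 1) := by
    calc ∑ j ∈ Icc t n, binomPMF n p (j + 1) = ∑ j ∈ Icc (t + 1) (n + 1), binomPMF n p j := by
          rw [← map_add_right_Icc, sum_map]
          rfl
      _ = binomTail n p (t + 1) := by
          refine (sum_subset (Icc_subset_Icc_right n.le_succ) fun j _ hjn => ?_).symm
          exact binomPMF_eq_zero_of_lt (by simp_all)
  rw [hshift, ← hextend, binomTail, mul_sum, mul_sum, ← sum_add_distrib]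
  exact sum_congr rfl fun j _ => binomPMF_succ_succ n j

theorem binomTail_add_le_mul (hp0 : 0 ≤ p) (hp1 : p ≤ 1) (n a b : ℕ) :
    binomTail n p (a + b) ≤ binomTail n p a * binomTail n p b := by
  induction n generalizing a b with
  | zero =>
    cases a with
    | zero => simp [binomTail_zero_right]
    | succ a =>
      rw [add_right_comm, binomTail_zero_succ]
      exact mul_nonneg (binomTail_nonneg hp0 hp1 0 _) (binomTail_nonneg hp0 hp1 0 b)
  | succ n ih =>
    obtain _ | a := a
    · simp [binomTail_zero_right]
    obtain _ | b := b
    · simp [binomTail_zero_right]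
    set T := binomTail n p
    have hT : Antitone T := binomTail_antitone hp0 hp1 n
    have hA : T (a + b + 1) ≤ T a * T b :=
      (ih a (b + 1)).trans
        (mul_le_mul_of_nonneg_left (hT b.le_succ) (binomTail_nonneg hp0 hp1 n a))
    have hB : T (a + b + 1) ≤ T (a + 1) * T b := by
      simpa only [add_right_comm] using ih (a + 1) b
    have hC : T (a + b + 1 + 1) ≤ T a * T (b + 1) := (hT (a + b + 1).le_succ).trans (ih a (b + 1))
    have hD : T (a + b + 1 + 1) ≤ T (a + 1) * T (b + 1) := by
      convert ih (a + 1) (b + 1) using 2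
      ring
    rw [show a + 1 + (b + 1) = a + b + 1 + 1 by ring, binomTail_succ_succ, binomTail_succ_succ,
      binomTail_succ_succ]
    linear_combination
      (p * p) * hA + (p * (1 - p)) * hB + ((1 - p) * p) * hC + ((1 - p) * (1 - p)) * hD
end

/-- For `X ~ Bin(n,p)` and any natural `t`, `Pr[X ≥ 2t] ≤ (Pr[X ≥ t])²`. -/
theorem binomTail_double_le_sq (n t : ℕ) (p : ℝ) (hp0 : 0 ≤ p) (hp1 : p ≤ 1) :
    binomTail n p (2 * t) ≤ (binomTail n p t) ^ 2 := by
  rw [two_mul, sq]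
  exact binomTail_add_le_mul hp0 hp1 n t t
end

section
/- If m balls are thrown independently and uniformly at random into n bins, and X denotes the number of nonempty bins, then E[X] ≥ min{m/2, 3n/10}. -/
/-!
Counting the assignments that miss a given bin gives `E[X] = n (1 - (1 - 1/n)^m)` exactly.
Since `(1 - x)^m ≤ e^{-mx} ≤ 1 / (1 + mx)`, this is at least `nm / (n + m) ≥ min(n, m) / 2`,
which dominates `min(m/2, 3n/10)`.
-/

open Finset

/-- The number of nonempty bins after throwing `m` balls into `n` bins according to `f`. -/
def nonemptyBins {m n : ℕ} (f : Fin m → Fin n) : ℕ :=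
  (Finset.univ.image f).card

/-- Expected number of nonempty bins when `m` balls are thrown independently and
uniformly at random into `n` bins. -/
noncomputable def expNonempty (m n : ℕ) : ℝ :=
  ∑ f : Fin m → Fin n, (1 / (n : ℝ) ^ m) * (nonemptyBins f : ℝ)

section Counting

variable {α β : Type*} [Fintype α] [DecidableEq α] [Fintype β] [DecidableEq β]

theorem card_filter_forall_ne (b : β) :
    #{f : α → β | ∀ a, f a ≠ b} = (Fintype.card β - 1) ^ Fintype.card α := by
  have : ({f : α → β | ∀ a, f a ≠ b} : Finset _) = Fintype.piFinset fun _ ↦ univ.erase b := by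
    ext f
    simp [Fintype.mem_piFinset]
  simp [this, Fintype.card_piFinset, card_erase_of_mem]

theorem cast_card_filter_mem_image (b : β) :
    (#{f : α → β | b ∈ univ.image f} : ℝ) =
      Fintype.card β ^ Fintype.card α - (Fintype.card β - 1) ^ Fintype.card α := by
  have hsplit := card_filter_add_card_filter_not (s := (univ : Finset (α → β)))
    fun f ↦ b ∈ univ.image f
  have hcomp : #{f : α → β | b ∉ univ.image f} = (Fintype.card β - 1) ^ Fintype.card α := by
    simpa using card_filter_forall_ne (α := α) b
  rw [hcomp, card_univ, Fintype.card_fun] at hsplit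
  rw [eq_sub_iff_add_eq, ← Nat.cast_pred (Fintype.card_pos_iff.mpr ⟨b⟩)]
  exact_mod_cast hsplit

theorem sum_cast_card_image :
    ∑ f : α → β, (#(univ.image f) : ℝ) =
      Fintype.card β * (Fintype.card β ^ Fintype.card α - (Fintype.card β - 1) ^ Fintype.card α) := by
  have hdouble := sum_card_bipartiteAbove_eq_sum_card_bipartiteBelow (s := (univ : Finset (α → β)))
    (t := (univ : Finset β)) (r := fun f b ↦ b ∈ univ.image f)
  simp only [bipartiteAbove, bipartiteBelow, filter_mem_eq_inter, univ_inter] at hdouble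
  rw [← Nat.cast_sum, hdouble, Nat.cast_sum]
  simp only [cast_card_filter_mem_image, sum_const, card_univ, nsmul_eq_mul]

end Counting

theorem expNonempty_eq (m n : ℕ) : expNonempty m n = n * (1 - (1 - 1 / (n : ℝ)) ^ m) := by
  rw [expNonempty, ← mul_sum]
  simp only [nonemptyBins, sum_cast_card_image, Fintype.card_fin]
  rcases n.eq_zero_or_pos with rfl | hn
  · simp
  · rw [one_sub_div (by positivity), div_pow]
    field_simp

theorem one_sub_pow_le_inv_one_add_mul {x : ℝ} (hx₀ : 0 ≤ x) (hx₁ : x ≤ 1) (m : ℕ) :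
    (1 - x) ^ m ≤ (1 + m * x)⁻¹ := by
  calc (1 - x) ^ m ≤ Real.exp (-x) ^ m :=
        pow_le_pow_left₀ (by linarith) (Real.one_sub_le_exp_neg x) m
    _ = (Real.exp (m * x))⁻¹ := by rw [← Real.exp_nat_mul, ← Real.exp_neg]; ring_nf
    _ ≤ (1 + m * x)⁻¹ := inv_anti₀ (by positivity) (by linarith [Real.add_one_le_exp (m * x)])

theorem min_div_two_le_mul_div_add {a b : ℝ} (ha : 0 ≤ a) (hb : 0 ≤ b) :
    min a b / 2 ≤ a * b / (a + b) := by
  rcases (add_nonneg ha hb).eq_or_lt with h | h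
  · obtain ⟨rfl, rfl⟩ : a = 0 ∧ b = 0 := ⟨by linarith, by linarith⟩
    simp
  rw [le_div_iff₀ h]
  rcases le_total a b with hab | hab
  · rw [min_eq_left hab]; nlinarith
  · rw [min_eq_right hab]; nlinarith

theorem mul_div_add_le_mul_one_sub_pow {n : ℝ} (hn : 1 ≤ n) (m : ℕ) :
    n * m / (n + m) ≤ n * (1 - (1 - 1 / n) ^ m) := by
  have hpow : (1 - 1 / n) ^ m ≤ (1 + m * (1 / n))⁻¹ :=
    one_sub_pow_le_inv_one_add_mul (by positivity) (div_le_one_of_le₀ hn (by linarith)) m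
  calc n * m / (n + m) = n * (1 - (1 + m * (1 / n))⁻¹) := by field_simp; ring
    _ ≤ n * (1 - (1 - 1 / n) ^ m) := by gcongr

theorem expNonempty_ge_min_general (m n : ℕ) :
    min ((m : ℝ) / 2) (3 * (n : ℝ) / 10) ≤ expNonempty m n := by
  rcases n.eq_zero_or_pos with rfl | hn
  · simp [expNonempty_eq]
  calc min ((m : ℝ) / 2) (3 * (n : ℝ) / 10) ≤ min (n : ℝ) m / 2 := by
        rw [← min_div_div_right two_pos.le]
        exact le_min (min_le_of_right_le (by linarith [n.cast_nonneg (α := ℝ)])) (min_le_left _ _)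
    _ ≤ n * m / (n + m) := min_div_two_le_mul_div_add n.cast_nonneg m.cast_nonneg
    _ ≤ n * (1 - (1 - 1 / (n : ℝ)) ^ m) := mul_div_add_le_mul_one_sub_pow (by exact_mod_cast hn) m
    _ = expNonempty m n := (expNonempty_eq m n).symm

/-- If `m` balls are thrown uniformly at random into `n` bins and `X` is the number of
nonempty bins, then `E[X] ≥ min {m/2, 3n/10}`. -/
theorem expNonempty_ge_min (m n : ℕ) (hn : 1 ≤ n) :
    min ((m : ℝ) / 2) (3 * (n : ℝ) / 10) ≤ expNonempty m n :=
  expNonempty_ge_min_general m n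
end

section
/- Let B1,...,Bk be i.i.d. Bin(n,p) random variables with k ≥ 4, and B̂ = max_i Bi with E[B̂] ≥ 30. Then Pr[B̂ ≥ E[B̂]/6] ≥ 1 - 1/e. -/
/-- `E[max_{i ∈ [k]} Bᵢ]` for `B₁, …, B_k` i.i.d. `Bin(n, p)` random variables. -/
noncomputable def binomMaxExp (k n : ℕ) (p : ℝ) : ℝ :=
  ∑ f : Fin k → Fin (n + 1),
    (∏ i, binomPMF n p (f i)) * (((Finset.univ.sup fun i => (f i : ℕ)) : ℕ) : ℝ)

namespace BMC
open Finset

lemma pmf_nonneg {p : ℝ} (hp0 : 0 ≤ p) (hp1 : p ≤ 1) (n j : ℕ) : 0 ≤ binomPMF n p j := by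
  unfold binomPMF
  have : (0:ℝ) ≤ 1 - p := by linarith
  positivity

lemma pmf_eq_bernstein (n : ℕ) (p : ℝ) (j : ℕ) :
    binomPMF n p j = Polynomial.eval p (bernsteinPolynomial ℝ n j) := by
  simp [binomPMF, bernsteinPolynomial]
  try ring

lemma pmf_sum (n : ℕ) (p : ℝ) : ∑ j ∈ range (n+1), binomPMF n p j = 1 := by
  simp only [pmf_eq_bernstein]
  rw [← Polynomial.eval_finset_sum, bernsteinPolynomial.sum]
  simp

lemma pmf_zero_of_gt {n j : ℕ} (h : n < j) (p : ℝ) : binomPMF n p j = 0 := by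
  simp [binomPMF, Nat.choose_eq_zero_of_lt h]

lemma pmf_mean (n : ℕ) (p : ℝ) : ∑ j ∈ range (n+1), binomPMF n p j * j = n * p := by
  have := bernsteinPolynomial.sum_smul (R := ℝ) n
  have h2 := congrArg (Polynomial.eval p) this
  rw [Polynomial.eval_finset_sum] at h2
  simp only [nsmul_eq_mul, Polynomial.eval_mul, Polynomial.eval_natCast, Polynomial.eval_X] at h2
  calc ∑ j ∈ range (n+1), binomPMF n p j * j
      = ∑ j ∈ range (n+1), (j:ℝ) * Polynomial.eval p (bernsteinPolynomial ℝ n j) := by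
        refine sum_congr rfl fun j _ => ?_; rw [pmf_eq_bernstein]; ring
    _ = n * p := h2

lemma pmf_sq (n : ℕ) (p : ℝ) :
    ∑ j ∈ range (n+1), binomPMF n p j * ((j:ℝ)*(j-1)) = (n*(n-1):ℕ) * p^2 := by
  have := bernsteinPolynomial.sum_mul_smul (R := ℝ) n
  have h2 := congrArg (Polynomial.eval p) this
  rw [Polynomial.eval_finset_sum] at h2
  simp only [nsmul_eq_mul, Polynomial.eval_mul, Polynomial.eval_natCast, Polynomial.eval_pow,
    Polynomial.eval_X] at h2
  calc ∑ j ∈ range (n+1), binomPMF n p j * ((j:ℝ)*(j-1))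
      = ∑ j ∈ range (n+1), ((j*(j-1):ℕ) : ℝ) * Polynomial.eval p (bernsteinPolynomial ℝ n j) := by
        refine sum_congr rfl fun j _ => ?_
        rw [pmf_eq_bernstein]
        rcases Nat.eq_zero_or_pos j with h | h
        · subst h; simp
        · have : ((j*(j-1):ℕ):ℝ) = (j:ℝ)*((j:ℝ)-1) := by
            push_cast [Nat.cast_sub h]; ring
          rw [this]; try ring
    _ = (n*(n-1):ℕ) * p^2 := by rw [h2]

lemma pmf_second_moment {p : ℝ} (hp0 : 0 ≤ p) (hp1 : p ≤ 1) (n : ℕ) :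
    ∑ j ∈ range (n+1), binomPMF n p j * (j:ℝ)^2 ≤ (n*p)^2 + n*p := by
  have h1 := pmf_sq n p
  have h2 := pmf_mean n p
  have : ∑ j ∈ range (n+1), binomPMF n p j * (j:ℝ)^2
      = ∑ j ∈ range (n+1), (binomPMF n p j * ((j:ℝ)*(j-1)) + binomPMF n p j * j) := by
    refine sum_congr rfl fun j _ => ?_; ring
  rw [this, sum_add_distrib, h1, h2]
  have hn : ((n*(n-1):ℕ):ℝ) ≤ (n:ℝ)^2 := by
    have : (n*(n-1):ℕ) ≤ n*n := Nat.mul_le_mul_left n (Nat.sub_le n 1)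
    calc ((n*(n-1):ℕ):ℝ) ≤ ((n*n:ℕ):ℝ) := by exact_mod_cast this
      _ = (n:ℝ)^2 := by push_cast; ring
  nlinarith [sq_nonneg p, sq_nonneg ((n:ℝ)*p)]

lemma pmf_succ_succ (n : ℕ) (p : ℝ) (j : ℕ) :
    binomPMF (n+1) p (j+1) = p * binomPMF n p j + (1-p) * binomPMF n p (j+1) := by
  unfold binomPMF
  rcases lt_or_ge n j with h | h
  · rw [Nat.choose_eq_zero_of_lt (by omega), Nat.choose_eq_zero_of_lt h,
      Nat.choose_eq_zero_of_lt (by omega)]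
    simp
  · rw [Nat.choose_succ_succ]
    rcases eq_or_lt_of_le h with rfl | h2
    · rw [Nat.choose_succ_self]
      simp [Nat.sub_self]
      ring
    · have e1 : n + 1 - (j+1) = n - j := by omega
      have e2 : n - j = (n - (j+1)) + 1 := by omega
      rw [e1, e2]
      push_cast
      ring

noncomputable def btail (n : ℕ) (p : ℝ) (j : ℕ) : ℝ := ∑ i ∈ Finset.Ico j (n+1), binomPMF n p i

lemma btail_def' (n : ℕ) (p : ℝ) (j m : ℕ) (h : n+1 ≤ m) :
    btail n p j = ∑ i ∈ range m, if j ≤ i then binomPMF n p i else 0 := by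
  rw [Finset.sum_ite, Finset.sum_const_zero, add_zero]
  have hf : (range m).filter (fun i => j ≤ i) = Ico j m := by
    ext i; simp [Finset.mem_Ico]; omega
  rw [hf, btail]
  refine Finset.sum_subset (Finset.Ico_subset_Ico le_rfl h) fun i hi hni => ?_
  simp only [Finset.mem_Ico] at hi hni
  exact pmf_zero_of_gt (by omega) p

lemma btail_nonneg {p : ℝ} (hp0 : 0 ≤ p) (hp1 : p ≤ 1) (n j : ℕ) : 0 ≤ btail n p j :=
  Finset.sum_nonneg fun i _ => pmf_nonneg hp0 hp1 n i

lemma btail_le_one {p : ℝ} (hp0 : 0 ≤ p) (hp1 : p ≤ 1) (n j : ℕ) : btail n p j ≤ 1 := by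
  rw [btail, ← pmf_sum n p]
  exact Finset.sum_le_sum_of_subset_of_nonneg
    (by intro i hi; simp only [Finset.mem_Ico] at hi; simp only [Finset.mem_range]; omega)
    (fun i _ _ => pmf_nonneg hp0 hp1 n i)

lemma btail_zero (n : ℕ) (p : ℝ) : btail n p 0 = 1 := by
  rw [btail, ← Finset.range_eq_Ico, pmf_sum]

lemma btail_anti {p : ℝ} (hp0 : 0 ≤ p) (hp1 : p ≤ 1) (n : ℕ) {j j' : ℕ} (h : j ≤ j') :
    btail n p j' ≤ btail n p j :=
  Finset.sum_le_sum_of_subset_of_nonneg (Finset.Ico_subset_Ico h le_rfl)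
    (fun i _ _ => pmf_nonneg hp0 hp1 n i)

lemma btail_succ_succ {p : ℝ} (n j : ℕ) :
    btail (n+1) p (j+1) = p * btail n p j + (1-p) * btail n p (j+1) := by
  have h1 : btail (n+1) p (j+1)
      = ∑ i ∈ range (n+2), (if j ≤ i then binomPMF (n+1) p (i+1) else 0) := by
    rw [btail_def' (n+1) p (j+1) (n+3) (by omega), Finset.sum_range_succ']
    simp [Nat.succ_le_succ_iff]
  have h2 : btail n p (j+1)
      = ∑ i ∈ range (n+2), (if j ≤ i then binomPMF n p (i+1) else 0) := by
    rw [btail_def' n p (j+1) (n+3) (by omega), Finset.sum_range_succ']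
    simp [Nat.succ_le_succ_iff]
  rw [h1, h2, btail_def' n p j (n+2) (by omega), Finset.mul_sum, Finset.mul_sum,
    ← Finset.sum_add_distrib]
  refine Finset.sum_congr rfl fun i _ => ?_
  by_cases hj : j ≤ i <;> simp [hj, pmf_succ_succ]

lemma btail_mono_n {p : ℝ} (hp0 : 0 ≤ p) (hp1 : p ≤ 1) (n j : ℕ) :
    btail n p j ≤ btail (n+1) p j := by
  cases j with
  | zero => rw [btail_zero, btail_zero]
  | succ j =>
    rw [btail_succ_succ]
    have h1 := btail_anti hp0 hp1 n (Nat.le_succ j)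
    nlinarith [btail_nonneg hp0 hp1 n (j+1)]

lemma btail_submul {p : ℝ} (hp0 : 0 ≤ p) (hp1 : p ≤ 1) (n : ℕ) :
    ∀ a b : ℕ, btail n p (a+b) ≤ btail n p a * btail n p b := by
  induction n with
  | zero =>
    intro a b
    match a, b with
    | 0, b => simp [btail_zero]
    | a+1, 0 => simp [btail_zero]
    | a+1, b+1 =>
      have : btail 0 p (a+1+(b+1)) = 0 := by
        rw [btail]
        have : Finset.Ico (a+1+(b+1)) 1 = ∅ := by
          apply Finset.Ico_eq_empty; omega
        simp [this]
      rw [this]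
      exact mul_nonneg (btail_nonneg hp0 hp1 0 _) (btail_nonneg hp0 hp1 0 _)
  | succ n ih =>
    intro a b
    match a, b with
    | 0, b => simp [btail_zero]
    | a+1, 0 => simp [btail_zero]
    | a+1, b+1 =>
      have e : a+1+(b+1) = (a+(b+1))+1 := by omega
      rw [e, btail_succ_succ]
      have h1 := ih a (b+1)
      have h2 : btail n p (a+1+(b+1)) ≤ btail n p (a+1) * btail n p (b+1) := ih (a+1) (b+1)
      have h2' : btail n p ((a+(b+1))+1) ≤ btail n p (a+1) * btail n p (b+1) := by
        rw [← e]; exact h2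
      have hmono := btail_mono_n hp0 hp1 n (b+1)
      have hnn1 := btail_nonneg hp0 hp1 (n+1) (a+1)
      have hnn2 := btail_nonneg hp0 hp1 n (b+1)
      calc p * btail n p (a+(b+1)) + (1-p) * btail n p (a+(b+1)+1)
          ≤ p * (btail n p a * btail n p (b+1)) + (1-p) * (btail n p (a+1) * btail n p (b+1)) := by
            have := mul_le_mul_of_nonneg_left h1 hp0
            have := mul_le_mul_of_nonneg_left h2' (by linarith : (0:ℝ) ≤ 1-p)
            linarith
        _ = (p * btail n p a + (1-p) * btail n p (a+1)) * btail n p (b+1) := by ring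
        _ = btail (n+1) p (a+1) * btail n p (b+1) := by rw [btail_succ_succ]
        _ ≤ btail (n+1) p (a+1) * btail (n+1) p (b+1) := by
            exact mul_le_mul_of_nonneg_left hmono hnn1

lemma tail_sum_eq_mean (n : ℕ) (p : ℝ) :
    ∑ t ∈ range n, btail n p (t+1) = ∑ j ∈ range (n+1), binomPMF n p j * j := by
  have : ∀ t ∈ range n, btail n p (t+1)
      = ∑ i ∈ range (n+1), if t+1 ≤ i then binomPMF n p i else 0 :=
    fun t _ => btail_def' n p (t+1) (n+1) le_rfl
  rw [Finset.sum_congr rfl this, Finset.sum_comm]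
  refine Finset.sum_congr rfl fun i hi => ?_
  simp only [Finset.mem_range] at hi
  have hf : (range n).filter (fun t => t+1 ≤ i) = range i := by
    ext t; simp; omega
  rw [Finset.sum_ite, Finset.sum_const_zero, add_zero, hf, Finset.sum_const, nsmul_eq_mul, Finset.card_range]
  ring

section prodspace
open scoped Classical
variable {p : ℝ} (n k : ℕ)

/-- `Pr[max ≥ j]`. -/
noncomputable def Ptail (k n : ℕ) (p : ℝ) (j : ℕ) : ℝ :=
  ∑ f : Fin k → Fin (n + 1),
    (∏ i, binomPMF n p (f i)) * (if j ≤ (Finset.univ.sup fun i => (f i : ℕ)) then 1 else 0)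

lemma fin_sum_pmf : ∑ x : Fin (n+1), binomPMF n p (x:ℕ) = 1 := by
  rw [Fin.sum_univ_eq_sum_range (fun j => binomPMF n p j) (n+1), pmf_sum]

lemma W_nonneg (hp0 : 0 ≤ p) (hp1 : p ≤ 1) (f : Fin k → Fin (n+1)) : 0 ≤ ∏ i, binomPMF n p (f i) :=
  Finset.prod_nonneg fun i _ => pmf_nonneg hp0 hp1 n _

lemma sum_W (hp0 : 0 ≤ p) (hp1 : p ≤ 1) : ∑ f : Fin k → Fin (n+1), ∏ i, binomPMF n p (f i) = 1 := by
  rw [← Fintype.sum_pow (fun x : Fin (n+1) => binomPMF n p (x:ℕ)) k, fin_sum_pmf, one_pow]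

lemma tfin_eq (j : ℕ) :
    ∑ x : Fin (n+1), (if j ≤ (x:ℕ) then binomPMF n p (x:ℕ) else 0) = btail n p j := by
  rw [btail_def' n p j (n+1) le_rfl,
    Fin.sum_univ_eq_sum_range (fun i => if j ≤ i then binomPMF n p i else 0) (n+1)]

lemma lowfin_eq (j : ℕ) :
    ∑ x : Fin (n+1), (if (x:ℕ) < j then binomPMF n p (x:ℕ) else 0) = 1 - btail n p j := by
  have h : ∀ x : Fin (n+1), (if (x:ℕ) < j then binomPMF n p (x:ℕ) else 0)
      = binomPMF n p (x:ℕ) - (if j ≤ (x:ℕ) then binomPMF n p (x:ℕ) else 0) := by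
    intro x
    by_cases hx : (x:ℕ) < j
    · rw [if_pos hx, if_neg (by omega), sub_zero]
    · rw [if_neg hx, if_pos (by omega)]; ring
  rw [Finset.sum_congr rfl (fun x _ => h x), Finset.sum_sub_distrib, fin_sum_pmf, tfin_eq]

lemma Ptail_nonneg (hp0 : 0 ≤ p) (hp1 : p ≤ 1) (j : ℕ) : 0 ≤ Ptail k n p j := by
  refine Finset.sum_nonneg fun f _ => mul_nonneg (W_nonneg n k hp0 hp1 f) ?_
  split <;> norm_num

lemma Ptail_le_one (hp0 : 0 ≤ p) (hp1 : p ≤ 1) (j : ℕ) : Ptail k n p j ≤ 1 := by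
  rw [← sum_W n k hp0 hp1]
  refine Finset.sum_le_sum fun f _ => ?_
  have := W_nonneg n k hp0 hp1 f
  split <;> simp <;> positivity

/-- complement identity -/
lemma Ptail_eq (hp0 : 0 ≤ p) (hp1 : p ≤ 1) (j : ℕ) (hj : 0 < j) :
    Ptail k n p j = 1 - (1 - btail n p j)^k := by
  have key : ∑ f : Fin k → Fin (n+1),
      (∏ i, binomPMF n p (f i)) * (if (Finset.univ.sup fun i => (f i : ℕ)) < j then 1 else 0)
      = (1 - btail n p j)^k := by
    have hpt : ∀ f : Fin k → Fin (n+1),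
        (∏ i, binomPMF n p (f i)) * (if (Finset.univ.sup fun i => (f i : ℕ)) < j then 1 else 0)
        = ∏ i, (if ((f i : ℕ) < j) then binomPMF n p (f i) else 0) := by
      intro f
      by_cases h : (Finset.univ.sup fun i => (f i : ℕ)) < j
      · rw [if_pos h, mul_one]
        refine Finset.prod_congr rfl fun i _ => ?_
        rw [if_pos ((Finset.sup_lt_iff (by exact hj)).mp h i (mem_univ i))]
      · rw [if_neg h, mul_zero]
        push_neg at h
        obtain ⟨i₀, -, hi₀⟩ := (Finset.le_sup_iff (by exact hj)).mp h
        exact (Finset.prod_eq_zero (mem_univ i₀) (by rw [if_neg (not_lt.mpr hi₀)])).symm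
    rw [Finset.sum_congr rfl (fun f _ => hpt f),
      ← Fintype.sum_pow (fun x : Fin (n+1) => if (x:ℕ) < j then binomPMF n p (x:ℕ) else 0) k,
      lowfin_eq]
  have h2 : ∀ f : Fin k → Fin (n+1),
      (∏ i, binomPMF n p (f i)) * (if j ≤ (Finset.univ.sup fun i => (f i : ℕ)) then 1 else 0)
      = (∏ i, binomPMF n p (f i))
        - (∏ i, binomPMF n p (f i)) * (if (Finset.univ.sup fun i => (f i : ℕ)) < j then 1 else 0) := by
    intro f
    by_cases h : j ≤ (Finset.univ.sup fun i => (f i : ℕ))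
    · rw [if_pos h, if_neg (by omega), mul_zero, sub_zero, mul_one]
    · rw [if_neg h, if_pos (by omega), mul_zero, mul_one, sub_self]
  rw [Ptail, Finset.sum_congr rfl (fun f _ => h2 f), Finset.sum_sub_distrib, sum_W n k hp0 hp1, key]

/-- union bound -/
lemma Ptail_le (hp0 : 0 ≤ p) (hp1 : p ≤ 1) (j : ℕ) (hj : 0 < j) :
    Ptail k n p j ≤ k * btail n p j := by
  have step1 : Ptail k n p j ≤ ∑ i₀ : Fin k, ∑ f : Fin k → Fin (n+1),
      (∏ i, binomPMF n p (f i)) * (if j ≤ (f i₀ : ℕ) then 1 else 0) := by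
    rw [Ptail, Finset.sum_comm]
    refine Finset.sum_le_sum fun f _ => ?_
    have hW := W_nonneg n k hp0 hp1 f
    by_cases h : j ≤ (Finset.univ.sup fun i => (f i : ℕ))
    · obtain ⟨i₀, -, hi₀⟩ := (Finset.le_sup_iff (by exact hj)).mp h
      rw [if_pos h, mul_one]
      calc ∏ i, binomPMF n p (f i)
          = (∏ i, binomPMF n p (f i)) * (if j ≤ (f i₀ : ℕ) then 1 else 0) := by
            rw [if_pos hi₀, mul_one]
        _ ≤ ∑ i' : Fin k, (∏ i, binomPMF n p (f i)) * (if j ≤ (f i' : ℕ) then 1 else 0) := by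
            refine Finset.single_le_sum (f := fun i' : Fin k =>
              (∏ i, binomPMF n p (f i)) * (if j ≤ (f i' : ℕ) then 1 else 0))
              (fun i' _ => ?_) (mem_univ i₀)
            refine mul_nonneg hW ?_
            split <;> norm_num
    · rw [if_neg h, mul_zero]
      refine Finset.sum_nonneg fun i' _ => mul_nonneg hW ?_
      split <;> norm_num
  have step2 : ∀ i₀ : Fin k, ∑ f : Fin k → Fin (n+1),
      (∏ i, binomPMF n p (f i)) * (if j ≤ (f i₀ : ℕ) then 1 else 0) = btail n p j := by
    intro i₀
    have hpt : ∀ f : Fin k → Fin (n+1),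
        (∏ i, binomPMF n p (f i)) * (if j ≤ (f i₀ : ℕ) then 1 else 0)
        = ∏ i, (binomPMF n p (f i) * (if i = i₀ then (if j ≤ (f i : ℕ) then 1 else 0) else 1)) := by
      intro f
      rw [Finset.prod_mul_distrib]
      congr 1
      rw [Finset.prod_ite_eq' Finset.univ i₀ (fun i => (if j ≤ (f i : ℕ) then (1:ℝ) else 0)),
        if_pos (mem_univ i₀)]
    rw [Finset.sum_congr rfl (fun f _ => hpt f),
      ← Fintype.prod_sum (κ := fun _ : Fin k => Fin (n+1))
        (fun (i : Fin k) (x : Fin (n+1)) => binomPMF n p (x:ℕ) * (if i = i₀ then (if j ≤ (x:ℕ) then (1:ℝ) else 0) else 1))]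
    have hcol : ∀ i : Fin k,
        ∑ x : Fin (n+1), binomPMF n p (x:ℕ) * (if i = i₀ then (if j ≤ (x:ℕ) then (1:ℝ) else 0) else 1)
        = if i = i₀ then btail n p j else 1 := by
      intro i
      by_cases hi : i = i₀
      · rw [if_pos hi, ← tfin_eq n]
        refine Finset.sum_congr rfl fun x _ => ?_
        rw [if_pos hi]
        by_cases hx : j ≤ (x:ℕ) <;> simp [hx]
      · rw [if_neg hi]
        have : ∀ x : Fin (n+1), binomPMF n p (x:ℕ) * (if i = i₀ then (if j ≤ (x:ℕ) then (1:ℝ) else 0) else 1) = binomPMF n p (x:ℕ) := by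
          intro x; rw [if_neg hi, mul_one]
        rw [Finset.sum_congr rfl (fun x _ => this x), fin_sum_pmf]
    rw [Finset.prod_congr rfl (fun i _ => hcol i),
      Finset.prod_ite_eq' Finset.univ i₀ (fun _ => btail n p j), if_pos (mem_univ i₀)]
  calc Ptail k n p j ≤ _ := step1
    _ = ∑ i₀ : Fin k, btail n p j := by exact Finset.sum_congr rfl fun i₀ _ => step2 i₀
    _ = k * btail n p j := by rw [Finset.sum_const, card_univ, Fintype.card_fin, nsmul_eq_mul]

lemma exp_le_n (hp0 : 0 ≤ p) (hp1 : p ≤ 1) : binomMaxExp k n p ≤ n := by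
  rw [binomMaxExp, ← one_mul (n:ℝ), ← sum_W n k hp0 hp1, Finset.sum_mul]
  refine Finset.sum_le_sum fun f _ => ?_
  have hW : 0 ≤ ∏ i, binomPMF n p (f i) :=
    Finset.prod_nonneg fun i _ => pmf_nonneg hp0 hp1 n _
  have hM : (Finset.univ.sup fun i => (f i : ℕ)) ≤ n :=
    Finset.sup_le fun i _ => Fin.is_le (f i)
  exact mul_le_mul_of_nonneg_left (by exact_mod_cast hM) hW

lemma exp_eq_sum_Ptail (hp0 : 0 ≤ p) (hp1 : p ≤ 1) :
    binomMaxExp k n p = ∑ j ∈ range (n+1), Ptail k n p (j+1) := by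
  have hMr : ∀ f : Fin k → Fin (n+1), (((Finset.univ.sup fun i => (f i : ℕ)) : ℕ) : ℝ)
      = ∑ j ∈ range (n+1),
        (if j+1 ≤ (Finset.univ.sup fun i => (f i : ℕ)) then (1:ℝ) else 0) := by
    intro f
    have hM : (Finset.univ.sup fun i => (f i : ℕ)) ≤ n :=
      Finset.sup_le fun i _ => Fin.is_le (f i)
    rw [Finset.sum_ite, Finset.sum_const_zero, add_zero, Finset.sum_const, nsmul_eq_mul, mul_one]
    congr 1
    have : (range (n+1)).filter (fun j => j+1 ≤ (Finset.univ.sup fun i => (f i : ℕ)))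
        = range (Finset.univ.sup fun i => (f i : ℕ)) := by
      ext t; simp only [Finset.mem_filter, Finset.mem_range]; omega
    rw [this, Finset.card_range]
  rw [binomMaxExp, Finset.sum_congr rfl (fun f _ => by rw [hMr f])]
  simp_rw [Finset.mul_sum]
  rw [Finset.sum_comm]
  simp only [Ptail]

lemma exp_le_main (hp0 : 0 ≤ p) (hp1 : p ≤ 1) {T : ℕ} (hT0 : 1 ≤ T) (hT : T ≤ n+1) :
    binomMaxExp k n p ≤ T + k * btail n p T * (n*p) := by
  rw [exp_eq_sum_Ptail n k hp0 hp1, Finset.range_eq_Ico,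
    ← Finset.sum_Ico_consecutive _ (Nat.zero_le T) hT]
  have h1 : ∑ j ∈ Ico 0 T, Ptail k n p (j+1) ≤ T := by
    calc ∑ j ∈ Ico 0 T, Ptail k n p (j+1) ≤ ∑ j ∈ Ico 0 T, 1 :=
      Finset.sum_le_sum fun j _ => Ptail_le_one n k hp0 hp1 (j+1)
    _ = T := by simp
  have h2 : ∑ j ∈ Ico T (n+1), Ptail k n p (j+1) ≤ k * btail n p T * (n*p) := by
    calc ∑ j ∈ Ico T (n+1), Ptail k n p (j+1)
        ≤ ∑ j ∈ Ico T (n+1), k * btail n p (j+1) :=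
          Finset.sum_le_sum fun j _ => Ptail_le n k hp0 hp1 (j+1) (Nat.succ_pos j)
      _ = k * ∑ j ∈ Ico T (n+1), btail n p (j+1) := by rw [Finset.mul_sum]
      _ ≤ k * (btail n p T * (n*p)) := by
          refine mul_le_mul_of_nonneg_left ?_ (by positivity)
          rw [Finset.sum_Ico_eq_sum_range]
          calc ∑ t ∈ range (n+1-T), btail n p (T+t+1)
              ≤ ∑ t ∈ range (n+1-T), btail n p T * btail n p (t+1) :=
                Finset.sum_le_sum fun t _ => btail_submul hp0 hp1 n T (t+1)
            _ = btail n p T * ∑ t ∈ range (n+1-T), btail n p (t+1) := by rw [Finset.mul_sum]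
            _ ≤ btail n p T * ∑ t ∈ range n, btail n p (t+1) := by
                refine mul_le_mul_of_nonneg_left ?_ (btail_nonneg hp0 hp1 n T)
                refine Finset.sum_le_sum_of_subset_of_nonneg ?_
                  (fun t _ _ => btail_nonneg hp0 hp1 n (t+1))
                exact Finset.range_subset_range.mpr (by omega)
            _ = btail n p T * (n*p) := by rw [tail_sum_eq_mean, pmf_mean]
      _ = k * btail n p T * (n*p) := by ring
  linarith

lemma mean_split (hp0 : 0 ≤ p) (hp1 : p ≤ 1) {T : ℕ} (hT0 : 1 ≤ T) (hT : T ≤ n+1) :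
    (n*p : ℝ) ≤ ((T:ℝ) - 1) + ∑ j ∈ Ico T (n+1), binomPMF n p j * j := by
  rw [← pmf_mean n p, Finset.range_eq_Ico, ← Finset.sum_Ico_consecutive _ (Nat.zero_le T) hT]
  have h1 : ∑ j ∈ Ico 0 T, binomPMF n p j * j ≤ (T:ℝ) - 1 := by
    calc ∑ j ∈ Ico 0 T, binomPMF n p j * j
        ≤ ∑ j ∈ Ico 0 T, binomPMF n p j * ((T:ℝ) - 1) := by
          refine Finset.sum_le_sum fun j hj => ?_
          refine mul_le_mul_of_nonneg_left ?_ (pmf_nonneg hp0 hp1 n j)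
          simp only [Finset.mem_Ico] at hj
          have : (j:ℝ) ≤ (T:ℝ) - 1 := by
            have : (j:ℝ) + 1 ≤ (T:ℝ) := by exact_mod_cast hj.2
            linarith
          exact this
      _ = (∑ j ∈ Ico 0 T, binomPMF n p j) * ((T:ℝ) - 1) := by rw [Finset.sum_mul]
      _ ≤ 1 * ((T:ℝ) - 1) := by
          refine mul_le_mul_of_nonneg_right ?_ (by simp; exact_mod_cast hT0)
          rw [← pmf_sum n p, Finset.range_eq_Ico]
          refine Finset.sum_le_sum_of_subset_of_nonneg (Finset.Ico_subset_Ico le_rfl hT)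
            (fun j _ _ => pmf_nonneg hp0 hp1 n j)
      _ = (T:ℝ) - 1 := one_mul _
  linarith

lemma cs_bound (hp0 : 0 ≤ p) (hp1 : p ≤ 1) {T : ℕ} (hT : T ≤ n+1) :
    (∑ j ∈ Ico T (n+1), binomPMF n p j * j)^2 ≤ btail n p T * ((n*p)^2 + n*p) := by
  have cs := Finset.sum_sq_le_sum_mul_sum_of_sq_eq_mul (Ico T (n+1))
    (r := fun j => binomPMF n p j * j) (f := fun j => binomPMF n p j)
    (g := fun j => binomPMF n p j * (j:ℝ)^2)
    (fun j _ => pmf_nonneg hp0 hp1 n j)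
    (fun j _ => mul_nonneg (pmf_nonneg hp0 hp1 n j) (sq_nonneg _))
    (fun j _ => by ring)
  have e1 : ∑ j ∈ Ico T (n+1), binomPMF n p j = btail n p T := rfl
  have e2 : ∑ j ∈ Ico T (n+1), binomPMF n p j * (j:ℝ)^2 ≤ (n*p)^2 + n*p := by
    refine le_trans ?_ (pmf_second_moment hp0 hp1 n)
    rw [Finset.range_eq_Ico]
    refine Finset.sum_le_sum_of_subset_of_nonneg (Finset.Ico_subset_Ico (Nat.zero_le T) le_rfl)
      (fun j _ _ => mul_nonneg (pmf_nonneg hp0 hp1 n j) (sq_nonneg _))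
  calc (∑ j ∈ Ico T (n+1), binomPMF n p j * j)^2
      ≤ (∑ j ∈ Ico T (n+1), binomPMF n p j) * ∑ j ∈ Ico T (n+1), binomPMF n p j * (j:ℝ)^2 := cs
    _ ≤ btail n p T * ((n*p)^2 + n*p) := by
        rw [e1]
        exact mul_le_mul_of_nonneg_left e2 (btail_nonneg hp0 hp1 n T)

end prodspace
end BMC

open scoped Classical in
/-- Let `B₁, …, B_k` be i.i.d. `Bin(n,p)` random variables with `k ≥ 4`, and
`B̂ = maxᵢ Bᵢ` with `E[B̂] ≥ 30`.  Then `Pr[B̂ ≥ E[B̂]/6] ≥ 1 - 1/e`. -/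
theorem binomMax_concentration (n k : ℕ) (p : ℝ) (hp0 : 0 ≤ p) (hp1 : p ≤ 1)
    (hk : 4 ≤ k) (hE : 30 ≤ binomMaxExp k n p) :
    1 - 1 / Real.exp 1 ≤
      ∑ f : Fin k → Fin (n + 1),
        (∏ i, binomPMF n p (f i)) *
          (if binomMaxExp k n p / 6 ≤ (((Finset.univ.sup fun i => (f i : ℕ)) : ℕ) : ℝ)
            then 1 else 0) := by
  open BMC Finset in
  set E := binomMaxExp k n p with hEdef
  set T : ℕ := ⌈E/6⌉₊ with hTdef
  set q : ℝ := BMC.btail n p T with hqdef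
  have hEn : E ≤ n := BMC.exp_le_n n k hp0 hp1
  have hn30 : (30:ℝ) ≤ (n:ℝ) := le_trans hE hEn
  have hT_lb : E/6 ≤ (T:ℝ) := Nat.le_ceil _
  have hT_ub : (T:ℝ) < E/6 + 1 := Nat.ceil_lt_add_one (by linarith)
  have hT1 : 1 ≤ T := by
    have h5 : (5:ℝ) ≤ (T:ℝ) := by linarith
    exact_mod_cast le_trans (by norm_num : (1:ℝ) ≤ 5) h5
  have hTn : T ≤ n + 1 := by
    have : (T:ℝ) < (n:ℝ) + 1 := by linarith
    exact_mod_cast le_of_lt (by exact_mod_cast this : T < n+1)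
  have hq0 : 0 ≤ q := BMC.btail_nonneg hp0 hp1 n T
  have hq1 : q ≤ 1 := BMC.btail_le_one hp0 hp1 n T
  have hmain : E ≤ T + k * q * (n*p) := BMC.exp_le_main n k hp0 hp1 hT1 hTn
  -- the goal sum equals Ptail k n p T
  have goal_eq : (∑ f : Fin k → Fin (n + 1),
      (∏ i, binomPMF n p (f i)) *
        (if E / 6 ≤ (((Finset.univ.sup fun i => (f i : ℕ)) : ℕ) : ℝ) then 1 else 0))
      = BMC.Ptail k n p T := by
    rw [BMC.Ptail]
    refine Finset.sum_congr rfl fun f _ => ?_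
    congr 1
    refine if_congr ?_ rfl rfl
    exact (Nat.ceil_le).symm
  rw [goal_eq, BMC.Ptail_eq n k hp0 hp1 T (by omega)]
  have key : (1 - q)^k ≤ 1 / Real.exp 1 := by
    have hm0 : (0:ℝ) ≤ n*p := by positivity
    rcases le_or_gt (E/3) (n*p) with hcase | hcase
    · -- Paley–Zygmund case
      have hX := BMC.mean_split n hp0 hp1 hT1 hTn
      have hX2 := BMC.cs_bound n hp0 hp1 hTn
      set X : ℝ := ∑ j ∈ Ico T (n+1), binomPMF n p j * j with hXdef
      have hm10 : (10:ℝ) ≤ n*p := by linarith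
      have hXlb : (n*p)/2 ≤ X := by
        have : (T:ℝ) - 1 < E/6 := by linarith
        nlinarith
      have hq522 : (5:ℝ)/22 ≤ q := by nlinarith [sq_nonneg X]
      calc (1-q)^k ≤ (17/22:ℝ)^k := by
            apply pow_le_pow_left₀ (by linarith) (by linarith)
        _ ≤ (17/22:ℝ)^4 := by
            apply pow_le_pow_of_le_one (by norm_num) (by norm_num) hk
        _ ≤ 1 / Real.exp 1 := by
            rw [le_div_iff₀ (Real.exp_pos 1)]
            nlinarith [Real.exp_one_lt_d9]
    · -- union bound case
      have hkq : (1:ℝ) ≤ k * q := by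
        by_contra hlt
        push_neg at hlt
        have hE3 : (0:ℝ) < E/3 := by linarith
        have h1 : k * q * (n*p) ≤ k * q * (E/3) :=
          mul_le_mul_of_nonneg_left (le_of_lt hcase) (by positivity)
        have h2 : k * q * (E/3) < 1 * (E/3) := mul_lt_mul_of_pos_right hlt hE3
        linarith
      calc (1-q)^k ≤ (Real.exp (-q))^k := by
            apply pow_le_pow_left₀ (by linarith)
            linarith [Real.add_one_le_exp (-q)]
        _ = Real.exp ((k:ℕ) * (-q)) := (Real.exp_nat_mul _ k).symm
        _ ≤ Real.exp (-1) := by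
            apply Real.exp_le_exp.mpr
            have : (k:ℝ) * q ≥ 1 := hkq
            nlinarith
        _ = 1 / Real.exp 1 := by rw [Real.exp_neg, one_div]
  linarith
end

section
/- Let Y1,...,Yk be i.i.d. Poisson Binomial random variables with parameters {p_1,...,p_n}, and let X_{ij} (i ∈ [n], j ∈ [k]) and S_1,...,S_n be independent Bernoulli variables with X_{ij} ~ Be(p_i) and S_i ~ Be(q_i), where q_i ≥ c for all i. Then E[max_{j∈[k]} Σ_{i=1}^n S_i X_{ij}] ≥ c · E[max_{j∈[k]} Y_j]. -/
/-- Weight of a Bernoulli(`p`) outcome: `p` if success, `1 - p` otherwise. -/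
def bw (p : ℝ) (b : Bool) : ℝ := if b then p else 1 - p

lemma bw_nonneg {p : ℝ} (h0 : 0 ≤ p) (h1 : p ≤ 1) (b : Bool) : 0 ≤ bw p b := by
  cases b <;> simp [bw] <;> linarith

lemma sum_bw_ind {n : ℕ} (q : Fin n → ℝ) (i : Fin n) :
    ∑ s : Fin n → Bool, (∏ i', bw (q i') (s i')) * (if s i then (1:ℝ) else 0) = q i := by
  have h : ∀ s : Fin n → Bool, (∏ i', bw (q i') (s i')) * (if s i then (1:ℝ) else 0)
      = ∏ i', (bw (q i') (s i') * (if i' = i then (if s i' then (1:ℝ) else 0) else 1)) := by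
    intro s
    rw [Finset.prod_mul_distrib]
    congr 1
    rw [Finset.prod_ite_eq' Finset.univ i (fun i' => if s i' then (1:ℝ) else 0)]
    simp
  simp_rw [h]
  rw [← Fintype.prod_sum (fun (i' : Fin n) (b : Bool) =>
    bw (q i') b * (if i' = i then (if b then (1:ℝ) else 0) else 1))]
  have : ∀ i' : Fin n,
      (∑ b : Bool, bw (q i') b * (if i' = i then (if b then (1:ℝ) else 0) else 1))
      = if i' = i then q i else 1 := by
    intro i'
    by_cases hi : i' = i <;> simp [hi, bw]
  simp_rw [this]
  simp

/-- Let `Y₁, …, Y_k` be i.i.d. Poisson Binomial `PB(p₁, …, pₙ)` random variables, and let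
`X_{ij}` (`i ∈ [n]`, `j ∈ [k]`) and `S₁, …, Sₙ` be independent Bernoulli variables with
`X_{ij} ~ Be(pᵢ)` and `Sᵢ ~ Be(qᵢ)`, where `qᵢ ≥ c` for all `i`.  Then
`E[max_{j ∈ [k]} ∑ᵢ Sᵢ X_{ij}] ≥ c · E[max_{j ∈ [k]} Y_j]`.
Both expectations are written as explicit sums over all Boolean outcomes. -/
theorem exp_max_random_subset (n k : ℕ) (p q : Fin n → ℝ) (c : ℝ)
    (hp : ∀ i, 0 ≤ p i ∧ p i ≤ 1) (hq : ∀ i, 0 ≤ q i ∧ q i ≤ 1)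
    (hc0 : 0 ≤ c) (hc : ∀ i, c ≤ q i) :
    c * (∑ y : Fin k → Fin n → Bool,
          (∏ j, ∏ i, bw (p i) (y j i)) *
            (((Finset.univ.sup fun j : Fin k =>
              ∑ i : Fin n, if y j i then (1 : ℕ) else 0 : ℕ)) : ℝ)) ≤
    ∑ s : Fin n → Bool, ∑ x : Fin n → Fin k → Bool,
      ((∏ i, bw (q i) (s i)) * ∏ i, ∏ j, bw (p i) (x i j)) *
        (((Finset.univ.sup fun j : Fin k =>
          ∑ i : Fin n, if s i && x i j then (1 : ℕ) else 0 : ℕ)) : ℝ) := by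
  have hL : (∑ y : Fin k → Fin n → Bool,
        (∏ j, ∏ i, bw (p i) (y j i)) *
          (((Finset.univ.sup fun j : Fin k =>
            ∑ i : Fin n, if y j i then (1 : ℕ) else 0 : ℕ)) : ℝ))
      = ∑ x : Fin n → Fin k → Bool,
        (∏ i, ∏ j, bw (p i) (x i j)) *
          (((Finset.univ.sup fun j : Fin k =>
            ∑ i : Fin n, if x i j then (1 : ℕ) else 0 : ℕ)) : ℝ) := by
    rw [← Equiv.sum_comp (⟨Function.swap, Function.swap, fun _ => rfl, fun _ => rfl⟩ :
      (Fin n → Fin k → Bool) ≃ (Fin k → Fin n → Bool))]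
    apply Finset.sum_congr rfl
    intro x _
    rw [Finset.prod_comm]
    rfl
  rw [hL, Finset.mul_sum, Finset.sum_comm]
  apply Finset.sum_le_sum
  intro x _
  set P : ℝ := ∏ i, ∏ j, bw (p i) (x i j) with hPdef
  have hP : 0 ≤ P := Finset.prod_nonneg fun i _ =>
    Finset.prod_nonneg fun j _ => bw_nonneg (hp i).1 (hp i).2 _
  have hW : ∀ s : Fin n → Bool, 0 ≤ ∏ i, bw (q i) (s i) := fun s =>
    Finset.prod_nonneg fun i _ => bw_nonneg (hq i).1 (hq i).2 _
  rcases Nat.eq_zero_or_pos k with hk | hk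
  · subst hk
    simp
  · have : Nonempty (Fin k) := ⟨⟨0, hk⟩⟩
    obtain ⟨js, _, hjs⟩ := Finset.exists_mem_eq_sup Finset.univ Finset.univ_nonempty
      (fun j : Fin k => ∑ i : Fin n, if x i j then (1 : ℕ) else 0)
    have hM : (((Finset.univ.sup fun j : Fin k =>
        ∑ i : Fin n, if x i j then (1 : ℕ) else 0 : ℕ)) : ℝ)
        = ∑ i, (if x i js then (1:ℝ) else 0) := by
      rw [hjs]; push_cast; rfl
    calc c * (P * (((Finset.univ.sup fun j : Fin k =>
            ∑ i : Fin n, if x i j then (1 : ℕ) else 0 : ℕ)) : ℝ))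
        = P * ∑ i, (c * (if x i js then (1:ℝ) else 0)) := by
          rw [hM, Finset.mul_sum]; rw [Finset.mul_sum, Finset.mul_sum]
          apply Finset.sum_congr rfl; intros; ring
      _ ≤ P * ∑ i, (if x i js then q i else 0) := by
          apply mul_le_mul_of_nonneg_left _ hP
          apply Finset.sum_le_sum
          intro i _
          by_cases hb : x i js <;> simp [hb, hc i]
      _ = P * ∑ i, ∑ s : Fin n → Bool,
            (∏ i', bw (q i') (s i')) * (if s i && x i js then (1:ℝ) else 0) := by
          congr 1
          apply Finset.sum_congr rfl
          intro i _
          by_cases hb : x i js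
          · simp only [hb, Bool.and_true]
            rw [sum_bw_ind]
            simp [hb]
          · simp [hb]
      _ = ∑ s : Fin n → Bool, ((∏ i, bw (q i) (s i)) * P) *
            ∑ i, (if s i && x i js then (1:ℝ) else 0) := by
          simp_rw [Finset.mul_sum]
          rw [Finset.sum_comm]
          apply Finset.sum_congr rfl
          intros
          apply Finset.sum_congr rfl
          intros; ring
      _ ≤ ∑ s : Fin n → Bool, ((∏ i, bw (q i) (s i)) * P) *
            (((Finset.univ.sup fun j : Fin k =>
              ∑ i : Fin n, if s i && x i j then (1 : ℕ) else 0 : ℕ)) : ℝ) := by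
          apply Finset.sum_le_sum
          intro s _
          apply mul_le_mul_of_nonneg_left _ (mul_nonneg (hW s) hP)
          have h1 : (∑ i, (if s i && x i js then (1:ℝ) else 0))
              = ((∑ i : Fin n, if s i && x i js then (1:ℕ) else 0 : ℕ) : ℝ) := by
            push_cast; rfl
          rw [h1]
          exact Nat.cast_le.mpr (Finset.le_sup
            (f := fun j : Fin k => ∑ i : Fin n, if s i && x i j then (1:ℕ) else 0)
            (Finset.mem_univ js))
end

section
/- Let U1 and U2 be independent Bernoulli variables with probabilities y1, y2, and let L, C be independent Bernoulli variables each with probability (y1+y2)/2. For k i.i.d. copies of the pair, E[max over k copies of (U1 + U2)] ≤ E[max over k copies of (L + C)]; equivalently, (1 - y1 y2)^k + (1-y1)^k (1-y2)^k ≥ (1 - ((y1+y2)/2)^2)^k + (1 - (y1+y2)/2)^{2k} for all y1, y2 ∈ [0,1] and k ≥ 1. -/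
/-- Karamata-type inequality for two points: if `0 ≤ b ≤ b' ≤ a' ≤ a` and
`a + b = a' + b'`, then `a'^k + b'^k ≤ a^k + b^k`. -/
lemma pow_sum_maj (a b a' b' : ℝ) (hb : 0 ≤ b) (hbb : b ≤ b') (hba : b' ≤ a')
    (haa : a' ≤ a) (hsum : a + b = a' + b') (k : ℕ) :
    a' ^ k + b' ^ k ≤ a ^ k + b ^ k := by
  rcases Nat.eq_zero_or_pos k with rfl | hk
  · simp
  have hb' : (0:ℝ) ≤ b' := hb.trans hbb
  have ha' : (0:ℝ) ≤ a' := hb'.trans hba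
  have ha : (0:ℝ) ≤ a := ha'.trans haa
  have hA : a ^ k - a' ^ k = (∑ i ∈ Finset.range k, a ^ i * a' ^ (k - 1 - i)) * (a - a') :=
    (geom_sum₂_mul a a' k).symm
  have hB : b' ^ k - b ^ k = (∑ i ∈ Finset.range k, b' ^ i * b ^ (k - 1 - i)) * (b' - b) :=
    (geom_sum₂_mul b' b k).symm
  have hAsum : (k : ℝ) * b' ^ (k - 1) ≤ ∑ i ∈ Finset.range k, a ^ i * a' ^ (k - 1 - i) := by
    calc (k : ℝ) * b' ^ (k - 1) = ∑ _i ∈ Finset.range k, b' ^ (k - 1) := by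
          rw [Finset.sum_const, nsmul_eq_mul, Finset.card_range]
      _ ≤ ∑ i ∈ Finset.range k, a ^ i * a' ^ (k - 1 - i) := by
          apply Finset.sum_le_sum
          intro i hi
          have hik : i ≤ k - 1 := Nat.le_sub_one_of_lt (Finset.mem_range.mp hi)
          have : b' ^ (k - 1) = b' ^ i * b' ^ (k - 1 - i) := by
            rw [← pow_add]
            congr 1
            omega
          rw [this]
          exact mul_le_mul (pow_le_pow_left₀ hb' (hba.trans haa) i)
            (pow_le_pow_left₀ hb' hba _) (pow_nonneg hb' _) (pow_nonneg ha _)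
  have hBsum : (∑ i ∈ Finset.range k, b' ^ i * b ^ (k - 1 - i)) ≤ (k : ℝ) * b' ^ (k - 1) := by
    calc (∑ i ∈ Finset.range k, b' ^ i * b ^ (k - 1 - i))
        ≤ ∑ _i ∈ Finset.range k, b' ^ (k - 1) := by
          apply Finset.sum_le_sum
          intro i hi
          have hik : i ≤ k - 1 := Nat.le_sub_one_of_lt (Finset.mem_range.mp hi)
          have : b' ^ (k - 1) = b' ^ i * b' ^ (k - 1 - i) := by
            rw [← pow_add]; congr 1; omega
          rw [this]
          exact mul_le_mul_of_nonneg_left (pow_le_pow_left₀ hb hbb _) (pow_nonneg hb' _)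
      _ = (k : ℝ) * b' ^ (k - 1) := by
          rw [Finset.sum_const, nsmul_eq_mul, Finset.card_range]
  have hd : a - a' = b' - b := by linarith
  have hdnn : (0:ℝ) ≤ a - a' := by linarith
  have hA' : (k : ℝ) * b' ^ (k - 1) * (a - a') ≤ a ^ k - a' ^ k := by
    rw [hA]; exact mul_le_mul_of_nonneg_right hAsum hdnn
  have hB' : b' ^ k - b ^ k ≤ (k : ℝ) * b' ^ (k - 1) * (b' - b) := by
    rw [hB]; exact mul_le_mul_of_nonneg_right hBsum (by linarith)
  rw [hd] at hA'
  linarith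

/-- Averaging two Bernoulli parameters increases the expected maximum over `k` i.i.d.
copies of the sum of the two Bernoullis; equivalently, for all `y₁, y₂ ∈ [0,1]` and
`k ≥ 1`:
`(1 - y₁y₂)^k + (1-y₁)^k (1-y₂)^k ≥ (1 - ((y₁+y₂)/2)²)^k + (1 - (y₁+y₂)/2)^{2k}`. -/
theorem bernoulli_averaging (y1 y2 : ℝ) (k : ℕ)
    (h1 : y1 ∈ Set.Icc (0 : ℝ) 1) (h2 : y2 ∈ Set.Icc (0 : ℝ) 1) (hk : 1 ≤ k) :
    (1 - ((y1 + y2) / 2) ^ 2) ^ k + (1 - (y1 + y2) / 2) ^ (2 * k) ≤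
      (1 - y1 * y2) ^ k + (1 - y1) ^ k * (1 - y2) ^ k := by
  obtain ⟨h10, h11⟩ := h1
  obtain ⟨h20, h21⟩ := h2
  have e1 : (1 - (y1 + y2) / 2) ^ (2 * k) = ((1 - (y1 + y2) / 2) ^ 2) ^ k := by
    rw [← pow_mul]
  have e2 : (1 - y1) ^ k * (1 - y2) ^ k = ((1 - y1) * (1 - y2)) ^ k := (mul_pow _ _ _).symm
  rw [e1, e2]
  apply pow_sum_maj
  · nlinarith
  · nlinarith [sq_nonneg (y1 - y2)]
  · nlinarith
  · nlinarith [sq_nonneg (y1 - y2)]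
  · ring
end

section
/- Let M = (E, I) be a matroid, let {X_e}_{e∈E} be independent {0,1}-valued random variables with success probabilities p_e, and let S = {e : X_e = 1}. For any δ ∈ (0,1), Pr[rank(S) ≤ (1-δ)·E[rank(S)]] ≤ e^{-δ² E[rank(S)]/2}. -/
open scoped Classical

/-- A matroid on a finite ground set, given by its independent sets. -/
structure FinMatroid (α : Type*) [DecidableEq α] [Fintype α] where
  Indep : Finset α → Prop
  empty_indep : Indep ∅
  subset_indep : ∀ ⦃I J : Finset α⦄, Indep J → I ⊆ J → Indep I
  exchange : ∀ ⦃I J : Finset α⦄, Indep I → Indep J → I.card < J.card →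
    ∃ e ∈ J \ I, Indep (insert e I)

/-- The rank of a set: the size of a largest independent subset. -/
noncomputable def FinMatroid.rank {α : Type*} [DecidableEq α] [Fintype α]
    (M : FinMatroid α) (S : Finset α) : ℕ :=
  (S.powerset.filter (fun I => M.Indep I)).sup Finset.card

/-- Probability that the random set of active elements (each element `e` active
independently with probability `p e`) equals `A`. -/
noncomputable def subsetWeight {α : Type*} [DecidableEq α] [Fintype α]
    (p : α → ℝ) (A : Finset α) : ℝ :=
  (∏ e ∈ A, p e) * ∏ e ∈ Finset.univ \ A, (1 - p e)

/-- `E[rank(S)]` for the random set `S` of active elements. -/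
noncomputable def expRank {α : Type*} [DecidableEq α] [Fintype α]
    (M : FinMatroid α) (p : α → ℝ) : ℝ :=
  ∑ A : Finset α, subsetWeight p A * (M.rank A : ℝ)

/-!
For every `t` and `c = exp (-t) - 1`, a monotone submodular `f : Finset α → ℕ` with increments
at most one satisfies `E[exp (-t f(S))] ≤ exp (c E[f(S)])`, as for a Poisson variable. This is
proved by exposing the coins one at a time: adding an element either never changes `f` or raises
`f ∅` by one, and in the latter case the two conditional bounds mix into the claimed one by an
elementary inequality for `exp`. Markov's inequality at `t = δ`, together with
`exp (-δ) ≤ 1 - δ + δ²/2`, gives the tail bound. Matroid rank is such an `f` by the submodularity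
of `Matroid.eRk`.
-/

section

variable {α : Type*} [DecidableEq α]

/-- With `f ∅ = 0` these are exactly the rank functions of matroids. -/
structure IsRankLike (f : Finset α → ℕ) : Prop where
  mono : Monotone f
  insert_le : ∀ e S, f (insert e S) ≤ f S + 1
  submod : ∀ e ⦃C D : Finset α⦄, C ⊆ D → f (insert e D) + f C ≤ f (insert e C) + f D

namespace IsRankLike

variable {f : Finset α → ℕ}

lemma comp_insert (hf : IsRankLike f) (e : α) : IsRankLike (fun A ↦ f (insert e A)) where
  mono _ _ h := hf.mono (Finset.insert_subset_insert e h)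
  insert_le x S := by simpa only [Finset.insert_comm] using hf.insert_le x (insert e S)
  submod x C D h := by
    simpa only [Finset.insert_comm] using hf.submod x (Finset.insert_subset_insert e h)

lemma singleton_eq_or (hf : IsRankLike f) (e : α) : f {e} = f ∅ ∨ f {e} = f ∅ + 1 := by
  have := hf.mono (Finset.empty_subset {e})
  have := hf.insert_le e ∅
  simp only [Finset.insert_empty] at this
  omega

lemma insert_eq_of_singleton_eq (hf : IsRankLike f) {e : α} (he : f {e} = f ∅) (A : Finset α) :
    f (insert e A) = f A := by
  have := hf.submod e (Finset.empty_subset A)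
  have := hf.mono (Finset.subset_insert e A)
  simp only [Finset.insert_empty] at *
  omega

end IsRankLike

noncomputable def subsetWeightOn (p : α → ℝ) (R A : Finset α) : ℝ :=
  (∏ e ∈ A, p e) * ∏ e ∈ R \ A, (1 - p e)

noncomputable def expectOn (p : α → ℝ) (R : Finset α) (g : Finset α → ℝ) : ℝ :=
  ∑ A ∈ R.powerset, subsetWeightOn p R A * g A

section Expectation

variable {p : α → ℝ}

lemma subsetWeightOn_nonneg (hp : ∀ e, 0 ≤ p e ∧ p e ≤ 1) (R A : Finset α) :
    0 ≤ subsetWeightOn p R A :=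
  mul_nonneg (Finset.prod_nonneg fun e _ ↦ (hp e).1)
    (Finset.prod_nonneg fun e _ ↦ sub_nonneg.2 (hp e).2)

lemma expectOn_mono (hp : ∀ e, 0 ≤ p e ∧ p e ≤ 1) (R : Finset α) {g h : Finset α → ℝ}
    (hgh : ∀ A, g A ≤ h A) : expectOn p R g ≤ expectOn p R h :=
  Finset.sum_le_sum fun A _ ↦ mul_le_mul_of_nonneg_left (hgh A) (subsetWeightOn_nonneg hp R A)

lemma expectOn_nonneg (hp : ∀ e, 0 ≤ p e ∧ p e ≤ 1) (R : Finset α) {g : Finset α → ℝ}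
    (hg : ∀ A, 0 ≤ g A) : 0 ≤ expectOn p R g :=
  Finset.sum_nonneg fun A _ ↦ mul_nonneg (subsetWeightOn_nonneg hp R A) (hg A)

lemma sum_subsetWeightOn (p : α → ℝ) (R : Finset α) :
    ∑ A ∈ R.powerset, subsetWeightOn p R A = 1 := by
  simp [subsetWeightOn, ← Finset.prod_add p (fun e ↦ 1 - p e) R]

lemma expectOn_add_const (p : α → ℝ) (R : Finset α) (g : Finset α → ℝ) (c : ℝ) :
    expectOn p R (fun A ↦ g A + c) = expectOn p R g + c := by
  simp only [expectOn, mul_add, Finset.sum_add_distrib, ← Finset.sum_mul, sum_subsetWeightOn,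
    one_mul]

lemma mul_expectOn (p : α → ℝ) (R : Finset α) (g : Finset α → ℝ) (c : ℝ) :
    c * expectOn p R g = expectOn p R (fun A ↦ c * g A) := by
  simp only [expectOn, Finset.mul_sum]
  exact Finset.sum_congr rfl fun A _ ↦ by ring

lemma expectOn_empty (p : α → ℝ) (g : Finset α → ℝ) : expectOn p ∅ g = g ∅ := by
  simp [expectOn, subsetWeightOn]

lemma expectOn_insert (p : α → ℝ) {e : α} {R : Finset α} (he : e ∉ R) (g : Finset α → ℝ) :
    expectOn p (insert e R) g =
      (1 - p e) * expectOn p R g + p e * expectOn p R (fun A ↦ g (insert e A)) := by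
  rw [expectOn, Finset.sum_powerset_insert he, mul_expectOn, mul_expectOn]
  congr 1 <;> refine Finset.sum_congr rfl fun A hA ↦ ?_
  · have heA : e ∉ R \ A := fun h ↦ he (Finset.mem_sdiff.1 h).1
    rw [subsetWeightOn, subsetWeightOn, Finset.insert_sdiff_of_notMem _
      (fun h ↦ he (Finset.mem_powerset.1 hA h)), Finset.prod_insert heA]
    ring
  · have heA : e ∉ A := fun h ↦ he (Finset.mem_powerset.1 hA h)
    rw [subsetWeightOn, subsetWeightOn, Finset.insert_sdiff_insert,
      Finset.sdiff_insert_of_notMem he, Finset.prod_insert heA]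
    ring

/-- Markov's inequality applied to `exp (-t g)`. -/
lemma expectOn_indicator_le_le (hp : ∀ e, 0 ≤ p e ∧ p e ≤ 1) (R : Finset α) (g : Finset α → ℝ)
    (a : ℝ) {t : ℝ} (ht : 0 ≤ t) :
    expectOn p R (fun A ↦ if g A ≤ a then 1 else 0) ≤
      Real.exp (t * a) * expectOn p R (fun A ↦ Real.exp (-t * g A)) := by
  rw [mul_expectOn]
  refine expectOn_mono hp R fun A ↦ ?_
  rw [← Real.exp_add]
  split_ifs with hA
  · exact Real.one_le_exp (by nlinarith)
  · exact (Real.exp_pos _).le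

end Expectation

lemma one_add_le_exp_mul_mul_one_add {x s : ℝ} (hx : -1 ≤ x) (hs0 : 0 ≤ s) (hs1 : s ≤ 1) :
    1 + x ≤ Real.exp (x * s) * (1 + x * (1 - s)) :=
  calc
    1 + x ≤ (1 + x * s) * (1 + x * (1 - s)) := by
      nlinarith [mul_nonneg (mul_nonneg (sq_nonneg x) hs0) (sub_nonneg.2 hs1)]
    _ ≤ Real.exp (x * s) * (1 + x * (1 - s)) :=
      mul_le_mul_of_nonneg_right (by linarith [Real.add_one_le_exp (x * s)]) (by nlinarith)

lemma mul_one_add_add_mul_exp_le_exp {x s q : ℝ} (hx : -1 ≤ x) (hs0 : 0 ≤ s) (hs1 : s ≤ 1)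
    (hq : 0 ≤ q) :
    q * (1 + x) + (1 - q) * Real.exp (x * s) ≤ Real.exp (x * (q + (1 - q) * s)) := by
  have hsplit :
      Real.exp (x * (q + (1 - q) * s)) = Real.exp (x * s) * Real.exp (x * q * (1 - s)) := by
    rw [← Real.exp_add]; ring_nf
  rw [hsplit]
  nlinarith [mul_le_mul_of_nonneg_left (one_add_le_exp_mul_mul_one_add hx hs0 hs1) hq,
    mul_le_mul_of_nonneg_left (Real.add_one_le_exp (x * q * (1 - s))) (Real.exp_pos (x * s)).le]

lemma exp_neg_le_one_sub_add_sq_div_two {x : ℝ} (hx : 0 ≤ x) :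
    Real.exp (-x) ≤ 1 - x + x ^ 2 / 2 := by
  have hprod : Real.exp (-x) * (1 + x + x ^ 2 / 2) ≤ 1 := by
    calc Real.exp (-x) * (1 + x + x ^ 2 / 2) ≤ Real.exp (-x) * Real.exp x :=
          mul_le_mul_of_nonneg_left (Real.quadratic_le_exp_of_nonneg hx) (Real.exp_pos _).le
      _ = 1 := by rw [← Real.exp_add, neg_add_cancel, Real.exp_zero]
  nlinarith [Real.exp_pos (-x), sq_nonneg (x ^ 2)]

lemma one_sub_mul_add_mul_le_exp {t q r μ₀ μ₁ S₀ S₁ : ℝ} (hq0 : 0 ≤ q) (hq1 : q ≤ 1)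
    (hμ : μ₀ ≤ μ₁) (hμ' : μ₁ ≤ μ₀ + 1)
    (hS₀ : S₀ ≤ Real.exp (-t * r + (Real.exp (-t) - 1) * (μ₀ - r)))
    (hS₁ : S₁ ≤ Real.exp (-t * (r + 1) + (Real.exp (-t) - 1) * (μ₁ - (r + 1)))) :
    (1 - q) * S₀ + q * S₁ ≤
      Real.exp (-t * r + (Real.exp (-t) - 1) * ((1 - q) * μ₀ + q * μ₁ - r)) := by
  set c := Real.exp (-t) - 1 with hc
  set B := -t * r + c * (μ₁ - r - 1) with hB
  have hS₀' : S₀ ≤ Real.exp B * Real.exp (c * (μ₀ - μ₁ + 1)) := by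
    rw [← Real.exp_add]; convert hS₀ using 2; ring
  have hS₁' : S₁ ≤ Real.exp B * (1 + c) := by
    rw [hc, add_sub_cancel, ← Real.exp_add]; convert hS₁ using 2; ring
  calc (1 - q) * S₀ + q * S₁
      ≤ Real.exp B * (q * (1 + c) + (1 - q) * Real.exp (c * (μ₀ - μ₁ + 1))) := by
        nlinarith [mul_le_mul_of_nonneg_left hS₀' (sub_nonneg.2 hq1),
          mul_le_mul_of_nonneg_left hS₁' hq0]
    _ ≤ Real.exp B * Real.exp (c * (q + (1 - q) * (μ₀ - μ₁ + 1))) := by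
        gcongr
        exact mul_one_add_add_mul_exp_le_exp (by linarith [Real.exp_pos (-t)]) (by linarith)
          (by linarith) hq0
    _ = _ := by rw [← Real.exp_add, hB]; ring_nf

namespace IsRankLike

variable {f : Finset α → ℕ} {p : α → ℝ}

theorem expectOn_exp_neg_mul_le (hf : IsRankLike f) (hp : ∀ e, 0 ≤ p e ∧ p e ≤ 1) (t : ℝ)
    (R : Finset α) :
    expectOn p R (fun A ↦ Real.exp (-t * f A)) ≤
      Real.exp (-t * f ∅ + (Real.exp (-t) - 1) * (expectOn p R (fun A ↦ (f A : ℝ)) - f ∅)) := by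
  induction R using Finset.induction_on generalizing f with
  | empty => simp [expectOn_empty]
  | @insert e R he ih =>
    rw [expectOn_insert p he, expectOn_insert p he]
    rcases hf.singleton_eq_or e with hloop | hstep
    · simp only [hf.insert_eq_of_singleton_eq hloop]
      simpa only [← add_mul, sub_add_cancel, one_mul] using ih hf
    · have hfe := ih (hf.comp_insert e)
      simp only [Finset.insert_empty, hstep, Nat.cast_add, Nat.cast_one] at hfe
      refine one_sub_mul_add_mul_le_exp (hp e).1 (hp e).2 ?_ ?_ (ih hf) hfe
      · exact expectOn_mono hp R fun A ↦ by
          exact_mod_cast hf.mono (Finset.subset_insert e A)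
      · rw [← expectOn_add_const]
        exact expectOn_mono hp R fun A ↦ by exact_mod_cast hf.insert_le e A

theorem expectOn_exp_neg_mul_le_exp (hf : IsRankLike f) (hp : ∀ e, 0 ≤ p e ∧ p e ≤ 1) (t : ℝ)
    (R : Finset α) :
    expectOn p R (fun A ↦ Real.exp (-t * f A)) ≤
      Real.exp ((Real.exp (-t) - 1) * expectOn p R (fun A ↦ (f A : ℝ))) := by
  refine (hf.expectOn_exp_neg_mul_le hp t R).trans (Real.exp_le_exp.2 ?_)
  nlinarith [Real.add_one_le_exp (-t), (Nat.cast_nonneg (f ∅) : (0 : ℝ) ≤ f ∅)]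

theorem lower_tail (hf : IsRankLike f) (hp : ∀ e, 0 ≤ p e ∧ p e ≤ 1) {δ : ℝ} (hδ : 0 ≤ δ)
    (R : Finset α) :
    expectOn p R
        (fun A ↦ if (f A : ℝ) ≤ (1 - δ) * expectOn p R (fun A ↦ (f A : ℝ)) then 1 else 0) ≤
      Real.exp (-(δ ^ 2) * expectOn p R (fun A ↦ (f A : ℝ)) / 2) := by
  set μ := expectOn p R (fun A ↦ (f A : ℝ))
  have hμ : 0 ≤ μ := expectOn_nonneg hp R fun A ↦ Nat.cast_nonneg _
  calc _ ≤ Real.exp (δ * ((1 - δ) * μ)) * expectOn p R (fun A ↦ Real.exp (-δ * f A)) :=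
        expectOn_indicator_le_le hp R _ _ hδ
    _ ≤ Real.exp (δ * ((1 - δ) * μ)) * Real.exp ((Real.exp (-δ) - 1) * μ) := by
        gcongr; exact hf.expectOn_exp_neg_mul_le_exp hp δ R
    _ ≤ Real.exp (-(δ ^ 2) * μ / 2) := by
        rw [← Real.exp_add, Real.exp_le_exp]
        nlinarith [exp_neg_le_one_sub_add_sq_div_two hδ]

end IsRankLike

namespace FinMatroid

variable [Fintype α] (M : FinMatroid α)

lemma card_le_rank {I S : Finset α} (hI : M.Indep I) (hIS : I ⊆ S) : I.card ≤ M.rank S :=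
  Finset.le_sup (Finset.mem_filter.2 ⟨Finset.mem_powerset.2 hIS, hI⟩)

lemma exists_indep_card_eq_rank (S : Finset α) :
    ∃ I ⊆ S, M.Indep I ∧ I.card = M.rank S := by
  obtain ⟨I, hI, hsup⟩ :=
    Finset.exists_mem_eq_sup (S.powerset.filter fun I ↦ M.Indep I) ⟨∅, by simp [M.empty_indep]⟩
      Finset.card
  simp only [Finset.mem_filter, Finset.mem_powerset] at hI
  exact ⟨I, hI.1, hI.2, hsup.symm⟩

def toMatroid : Matroid α :=
  (IndepMatroid.ofFinset Set.univ M.Indep M.empty_indep M.subset_indep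
    (fun _ _ hI hJ hcard ↦ by
      obtain ⟨e, he, hind⟩ := M.exchange hI hJ hcard
      exact ⟨e, (Finset.mem_sdiff.1 he).1, (Finset.mem_sdiff.1 he).2, hind⟩)
    (fun _ _ ↦ Set.subset_univ _)).matroid

lemma toMatroid_indep_coe {I : Finset α} : M.toMatroid.Indep I ↔ M.Indep I := by
  rw [toMatroid, IndepMatroid.matroid_indep_iff, IndepMatroid.ofFinset_indep]

lemma eRk_toMatroid (S : Finset α) : M.toMatroid.eRk S = M.rank S := by
  refine le_antisymm (Matroid.eRk_le_iff.2 fun I hIS hI ↦ ?_) ?_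
  · obtain ⟨J, rfl⟩ := (S.finite_toSet.subset hIS).exists_finset_coe
    rw [Set.encard_coe_eq_coe_finsetCard, Nat.cast_le]
    exact M.card_le_rank ((M.toMatroid_indep_coe).1 hI) (Finset.coe_subset.1 hIS)
  · obtain ⟨I, hIS, hI, hcard⟩ := M.exists_indep_card_eq_rank S
    rw [← hcard, ← Set.encard_coe_eq_coe_finsetCard]
    exact (M.toMatroid_indep_coe.2 hI).encard_le_eRk_of_subset (Finset.coe_subset.2 hIS)

lemma isRankLike_rank : IsRankLike M.rank := by
  have h := M.eRk_toMatroid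
  refine ⟨fun S T hST ↦ ?_, fun e S ↦ ?_, fun e C D hCD ↦ ?_⟩
  · have := M.toMatroid.eRk_mono (Finset.coe_subset.2 hST)
    rwa [h, h, Nat.cast_le] at this
  · have := M.toMatroid.eRk_insert_le_add_one e S
    rw [← Finset.coe_insert, h, h] at this
    exact_mod_cast this
  · have hsub := M.toMatroid.eRk_submod (insert e C : Finset α) D
    have hmono := M.toMatroid.eRk_mono (show (C : Set α) ⊆ ↑(insert e C) ∩ ↑D from
      Set.subset_inter (Finset.coe_subset.2 (Finset.subset_insert e C)) (Finset.coe_subset.2 hCD))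
    rw [← Finset.coe_union, Finset.insert_union, Finset.union_eq_right.2 hCD, h, h, h] at hsub
    rw [h] at hmono
    have : (M.rank (insert e D) + M.rank C : ℕ∞) ≤ M.rank (insert e C) + M.rank D :=
      calc (M.rank (insert e D) + M.rank C : ℕ∞)
          ≤ M.toMatroid.eRk (↑(insert e C) ∩ ↑D) + M.rank (insert e D) := by
            rw [add_comm]; gcongr
        _ ≤ _ := hsub
    exact_mod_cast this

end FinMatroid

end

theorem rank_lower_tail_general {α : Type*} [DecidableEq α] [Fintype α]
    (M : FinMatroid α) (p : α → ℝ) (hp : ∀ e, 0 ≤ p e ∧ p e ≤ 1)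
    (δ : ℝ) (hδ0 : 0 < δ) :
    (∑ A : Finset α,
        if (M.rank A : ℝ) ≤ (1 - δ) * expRank M p then subsetWeight p A else 0) ≤
      Real.exp (-(δ ^ 2) * expRank M p / 2) := by
  have hexp : expRank M p = expectOn p Finset.univ (fun A ↦ (M.rank A : ℝ)) := by
    rw [expectOn, Finset.powerset_univ]; rfl
  have htail := M.isRankLike_rank.lower_tail hp hδ0.le Finset.univ
  rw [← hexp, expectOn, Finset.powerset_univ] at htail
  simp only [mul_ite, mul_one, mul_zero] at htail
  exact htail

/-- Lower-tail concentration for the rank of a random subset: if each element `e` is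
included in `S` independently with probability `p e`, then for any `δ ∈ (0,1)`,
`Pr[rank(S) ≤ (1-δ)·E[rank(S)]] ≤ exp(-δ² E[rank(S)] / 2)`. -/
theorem rank_lower_tail {α : Type*} [DecidableEq α] [Fintype α]
    (M : FinMatroid α) (p : α → ℝ) (hp : ∀ e, 0 ≤ p e ∧ p e ≤ 1)
    (δ : ℝ) (hδ0 : 0 < δ) (hδ1 : δ < 1) :
    (∑ A : Finset α,
        if (M.rank A : ℝ) ≤ (1 - δ) * expRank M p then subsetWeight p A else 0) ≤
      Real.exp (-(δ ^ 2) * expRank M p / 2) :=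
  rank_lower_tail_general M p hp δ hδ0
end

section
/- Let M = (E, I) be a matroid and B, B' two bases of M. Then there exists a bijection π : B' → B such that for every e ∈ B', the set (B ∖ {π(e)}) ∪ {e} is a base of M. -/
/-- A base of a matroid: a maximal independent set. -/
def FinMatroid.IsBase {α : Type*} [DecidableEq α] [Fintype α]
    (M : FinMatroid α) (B : Finset α) : Prop :=
  M.Indep B ∧ ∀ e ∉ B, ¬ M.Indep (insert e B)

open Finset
open scoped Classical

namespace FinMatroid

variable {α : Type*} [DecidableEq α] [Fintype α] {M : FinMatroid α}

/-- The rank of a finset: the maximum size of an independent subset. -/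
noncomputable def rk (M : FinMatroid α) (X : Finset α) : ℕ :=
  (X.powerset.filter fun I => M.Indep I).sup Finset.card

lemma le_rk {I X : Finset α} (hIX : I ⊆ X) (hI : M.Indep I) : I.card ≤ M.rk X :=
  Finset.le_sup (by simp [Finset.mem_filter, Finset.mem_powerset, hIX, hI])

lemma exists_rk (X : Finset α) : ∃ I, I ⊆ X ∧ M.Indep I ∧ I.card = M.rk X := by
  obtain ⟨I, hI, h⟩ := Finset.exists_mem_eq_sup (X.powerset.filter fun I => M.Indep I)
    ⟨∅, by simp [M.empty_indep]⟩ Finset.card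
  rw [Finset.mem_filter, Finset.mem_powerset] at hI
  exact ⟨I, hI.1, hI.2, h.symm⟩

lemma rk_mono {X Y : Finset α} (h : X ⊆ Y) : M.rk X ≤ M.rk Y := by
  obtain ⟨I, hIX, hI, hcard⟩ := exists_rk (M := M) X
  rw [← hcard]
  exact le_rk (hIX.trans h) hI

lemma rk_indep {X : Finset α} (hX : M.Indep X) : M.rk X = X.card := by
  refine le_antisymm ?_ (le_rk Finset.Subset.rfl hX)
  obtain ⟨I, hIX, _, hcard⟩ := exists_rk (M := M) X
  rw [← hcard]
  exact Finset.card_le_card hIX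

lemma rk_lt_of_dep {X : Finset α} (hX : ¬ M.Indep X) : M.rk X < X.card := by
  obtain ⟨I, hIX, hI, hcard⟩ := exists_rk (M := M) X
  rw [← hcard]
  rcases lt_or_eq_of_le (Finset.card_le_card hIX) with h | h
  · exact h
  · exact absurd (Finset.eq_of_subset_of_card_le hIX h.ge ▸ hI) hX

/-- Augmentation: an independent set can be enlarged inside the union with a larger
independent set until it reaches that set's size. -/
lemma augment {J : Finset α} (hJ : M.Indep J) :
    ∀ n (I : Finset α), M.Indep I → I.card ≤ J.card → J.card - I.card ≤ n →
      ∃ K, I ⊆ K ∧ K ⊆ I ∪ J ∧ M.Indep K ∧ K.card = J.card := by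
  intro n
  induction n with
  | zero =>
    intro I hI hle h0
    exact ⟨I, Finset.Subset.rfl, Finset.subset_union_left, hI, le_antisymm hle (by omega)⟩
  | succ n ih =>
    intro I hI hle h
    rcases eq_or_lt_of_le hle with heq | hlt
    · exact ⟨I, Finset.Subset.rfl, Finset.subset_union_left, hI, heq⟩
    · obtain ⟨e, he, hind⟩ := M.exchange hI hJ hlt
      rw [Finset.mem_sdiff] at he
      have hcard : (insert e I).card = I.card + 1 := Finset.card_insert_of_notMem he.2
      obtain ⟨K, h1, h2, h3, h4⟩ := ih (insert e I) hind (by omega) (by omega)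
      refine ⟨K, (Finset.subset_insert e I).trans h1, h2.trans ?_, h3, h4⟩
      exact Finset.union_subset
        (Finset.insert_subset (Finset.mem_union_right _ he.1) Finset.subset_union_left)
        Finset.subset_union_right

/-- `X` spans `e` if adding `e` does not increase the rank. -/
def Spans (M : FinMatroid α) (X : Finset α) (e : α) : Prop :=
  M.rk (insert e X) = M.rk X

lemma spans_mono {X Y : Finset α} {e : α} (hXY : X ⊆ Y) (h : M.Spans X e) :
    M.Spans Y e := by
  by_cases heY : e ∈ Y
  · unfold Spans; rw [Finset.insert_eq_self.mpr heY]
  have heX : e ∉ X := fun hx => heY (hXY hx)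
  refine le_antisymm ?_ (rk_mono (Finset.subset_insert e Y))
  by_contra hcon
  push_neg at hcon
  obtain ⟨I, hIY, hI, hIcard⟩ := exists_rk (M := M) (insert e Y)
  by_cases heI : e ∈ I
  · obtain ⟨J, hJX, hJ, hJcard⟩ := exists_rk (M := M) X
    have hJY : M.rk X ≤ M.rk Y := rk_mono hXY
    have hIe : M.Indep (I.erase e) := M.subset_indep hI (Finset.erase_subset e I)
    have hIecard : (I.erase e).card = I.card - 1 := Finset.card_erase_of_mem heI
    have hle : J.card ≤ (I.erase e).card := by omega
    obtain ⟨K, hJK, hKsub, hK, hKcard⟩ :=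
      augment hIe (((I.erase e).card) - J.card) J hJ hle le_rfl
    have hKY : K ⊆ Y := by
      refine hKsub.trans (Finset.union_subset (hJX.trans hXY) ?_)
      intro x hx
      have hxI := Finset.mem_of_mem_erase hx
      have hxe := Finset.ne_of_mem_erase hx
      rcases Finset.mem_insert.mp (hIY hxI) with h' | h'
      · exact absurd h' hxe
      · exact h'
    have hKlt : K.card < I.card := by omega
    obtain ⟨g, hg, hgind⟩ := M.exchange hK hI hKlt
    rw [Finset.mem_sdiff] at hg
    by_cases hge : g = e
    · have heJ : e ∉ J := fun h' => heX (hJX h')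
      have hindeJ : M.Indep (insert e J) := by
        rw [← hge]; exact M.subset_indep hgind (Finset.insert_subset_insert _ hJK)
      have hle2 : (insert e J).card ≤ M.rk (insert e X) :=
        le_rk (Finset.insert_subset_insert _ hJX) hindeJ
      rw [Finset.card_insert_of_notMem heJ, h] at hle2
      omega
    · have hgY : g ∈ Y := by
        rcases Finset.mem_insert.mp (hIY hg.1) with h' | h'
        · exact absurd h' hge
        · exact h'
      have hle2 : (insert g K).card ≤ M.rk Y :=
        le_rk (Finset.insert_subset hgY hKY) hgind
      rw [Finset.card_insert_of_notMem hg.2] at hle2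
      omega
  · have : I ⊆ Y := fun x hx => by
      rcases Finset.mem_insert.mp (hIY hx) with h' | h'
      · exact absurd (h' ▸ hx) heI
      · exact h'
    have := le_rk this hI
    omega

lemma card_le_of_spans {S T : Finset α} (hS : M.Indep S) (hT : M.Indep T)
    (h : ∀ e ∈ S, M.Spans T e) : S.card ≤ T.card := by
  by_contra hcon
  push_neg at hcon
  obtain ⟨g, hg, hgind⟩ := M.exchange hT hS hcon
  rw [Finset.mem_sdiff] at hg
  have h1 : (insert g T).card ≤ M.rk (insert g T) := le_rk Finset.Subset.rfl hgind
  rw [Finset.card_insert_of_notMem hg.2, h g hg.1, rk_indep hT] at h1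
  omega

lemma base_card_eq {B B' : Finset α} (hB : M.IsBase B) (hB' : M.IsBase B') :
    B.card = B'.card := by
  by_contra hne
  rcases Ne.lt_or_gt hne with h | h
  · obtain ⟨e, he, hind⟩ := M.exchange hB.1 hB'.1 h
    rw [Finset.mem_sdiff] at he
    exact hB.2 e he.2 hind
  · obtain ⟨e, he, hind⟩ := M.exchange hB'.1 hB.1 h
    rw [Finset.mem_sdiff] at he
    exact hB'.2 e he.2 hind

lemma isBase_of_indep_card {B I : Finset α} (hB : M.IsBase B) (hI : M.Indep I)
    (hcard : I.card = B.card) : M.IsBase I := by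
  refine ⟨hI, fun e he hind => ?_⟩
  have hlt : B.card < (insert e I).card := by
    rw [Finset.card_insert_of_notMem he]; omega
  obtain ⟨g, hg, hgind⟩ := M.exchange hB.1 hind hlt
  rw [Finset.mem_sdiff] at hg
  exact hB.2 g hg.2 hgind

lemma exists_circuit {X : Finset α} (hX : ¬ M.Indep X) :
    ∃ C, C ⊆ X ∧ ¬ M.Indep C ∧ ∀ f ∈ C, M.Indep (C.erase f) := by
  obtain ⟨C, hC, hmin⟩ := Finset.exists_min_image
    (X.powerset.filter fun Y => ¬ M.Indep Y) Finset.card ⟨X, by simp [hX]⟩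
  rw [Finset.mem_filter, Finset.mem_powerset] at hC
  refine ⟨C, hC.1, hC.2, fun f hf => ?_⟩
  by_contra hdep
  have hmem : C.erase f ∈ X.powerset.filter fun Y => ¬ M.Indep Y := by
    rw [Finset.mem_filter, Finset.mem_powerset]
    exact ⟨(Finset.erase_subset f C).trans hC.1, hdep⟩
  have := hmin _ hmem
  have := Finset.card_erase_of_mem hf
  have : 0 < C.card := Finset.card_pos.mpr ⟨f, hf⟩
  omega

/-- The neighborhood of `e`: elements of the base `B` that can be exchanged with `e`. -/
noncomputable def nbr (M : FinMatroid α) (B : Finset α) (e : α) : Finset α :=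
  B.filter fun f => M.IsBase (insert e (B.erase f))

lemma nbr_subset {B : Finset α} {e : α} : M.nbr B e ⊆ B := Finset.filter_subset _ _

lemma spans_nbr {B : Finset α} (hB : M.IsBase B) {e : α} (he : M.Indep {e}) :
    M.Spans (M.nbr B e) e := by
  by_cases heB : e ∈ B
  · have : e ∈ M.nbr B e := by
      rw [nbr, Finset.mem_filter]
      exact ⟨heB, by rw [Finset.insert_erase heB]; exact hB⟩
    unfold Spans
    rw [Finset.insert_eq_self.mpr this]
  · -- e ∉ B : use a circuit in insert e B
    have hdep : ¬ M.Indep (insert e B) := hB.2 e heB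
    obtain ⟨C, hCsub, hCdep, hCmin⟩ := exists_circuit hdep
    have heC : e ∈ C := by
      by_contra heC
      have : C ⊆ B := fun x hx => by
        rcases Finset.mem_insert.mp (hCsub hx) with h' | h'
        · exact absurd (h' ▸ hx) heC
        · exact h'
      exact hCdep (M.subset_indep hB.1 this)
    -- every f ∈ C.erase e is in the neighborhood of e
    have key : C.erase e ⊆ M.nbr B e := by
      intro f hf
      have hfC : f ∈ C := Finset.mem_of_mem_erase hf
      have hfe : f ≠ e := Finset.ne_of_mem_erase hf
      have hfB : f ∈ B := by
        rcases Finset.mem_insert.mp (hCsub hfC) with h' | h'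
        · exact absurd h' hfe
        · exact h'
      rw [nbr, Finset.mem_filter]
      refine ⟨hfB, ?_⟩
      set A := insert e (B.erase f) with hA
      have heA : e ∉ B.erase f := fun h => heB (Finset.mem_of_mem_erase h)
      have hAcard : A.card = B.card := by
        rw [hA, Finset.card_insert_of_notMem heA, Finset.card_erase_of_mem hfB]
        have : 0 < B.card := Finset.card_pos.mpr ⟨f, hfB⟩
        omega
      refine isBase_of_indep_card hB ?_ hAcard
      by_contra hAdep
      -- rank computations
      have hrkA_lt : M.rk A < B.card := hAcard ▸ rk_lt_of_dep hAdep
      have hBe : M.Indep (B.erase f) := M.subset_indep hB.1 (Finset.erase_subset f B)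
      have hrkBe : M.rk (B.erase f) = B.card - 1 := by
        rw [rk_indep hBe, Finset.card_erase_of_mem hfB]
      have hrkA_ge : B.card - 1 ≤ M.rk A := hrkBe ▸ rk_mono (Finset.subset_insert e _)
      -- C.erase f spans f
      have hCf_indep : M.Indep (C.erase f) := hCmin f hfC
      have hspans_f : M.Spans (C.erase f) f := by
        unfold Spans
        rw [Finset.insert_erase hfC, rk_indep hCf_indep, Finset.card_erase_of_mem hfC]
        have h1 : M.rk C < C.card := rk_lt_of_dep hCdep
        have h2 : M.rk (C.erase f) ≤ M.rk C := rk_mono (Finset.erase_subset f C)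
        rw [rk_indep hCf_indep, Finset.card_erase_of_mem hfC] at h2
        omega
      -- C.erase f ⊆ A
      have hCfA : C.erase f ⊆ A := by
        intro x hx
        have hxC : x ∈ C := Finset.mem_of_mem_erase hx
        have hxf : x ≠ f := Finset.ne_of_mem_erase hx
        rcases Finset.mem_insert.mp (hCsub hxC) with h' | h'
        · exact h' ▸ Finset.mem_insert_self e _
        · exact Finset.mem_insert_of_mem (Finset.mem_erase.mpr ⟨hxf, h'⟩)
      have hspans_fA : M.Spans A f := spans_mono hCfA hspans_f
      -- insert f A = insert e B
      have hinsfA : insert f A = insert e B := by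
        rw [hA, Finset.insert_comm, Finset.insert_erase hfB]
      have hrk_ins : B.card ≤ M.rk (insert e B) :=
        (rk_indep hB.1) ▸ rk_mono (Finset.subset_insert e B)
      unfold Spans at hspans_fA
      rw [hinsfA] at hspans_fA
      omega
    -- now insert e (nbr B e) is dependent, so its rank equals |nbr B e|
    have heN : e ∉ M.nbr B e := fun h => heB (nbr_subset h)
    have hCN : C ⊆ insert e (M.nbr B e) := by
      intro x hx
      by_cases hxe : x = e
      · exact Finset.mem_insert.mpr (Or.inl hxe)
      · exact Finset.mem_insert_of_mem (key (Finset.mem_erase.mpr ⟨hxe, hx⟩))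
    have hNdep : ¬ M.Indep (insert e (M.nbr B e)) :=
      fun h => hCdep (M.subset_indep h hCN)
    have hNindep : M.Indep (M.nbr B e) := M.subset_indep hB.1 nbr_subset
    unfold Spans
    have h1 : M.rk (insert e (M.nbr B e)) < (M.nbr B e).card + 1 := by
      have := rk_lt_of_dep hNdep
      rwa [Finset.card_insert_of_notMem heN] at this
    have h2 : (M.nbr B e).card ≤ M.rk (insert e (M.nbr B e)) :=
      (rk_indep hNindep) ▸ rk_mono (Finset.subset_insert e _)
    rw [rk_indep hNindep]
    omega

end FinMatroid

/-- Brualdi's symmetric exchange bijection: for any two bases `B`, `B'` of a matroid `M`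
there is a bijection `π : B' → B` such that for every `e ∈ B'`, the set
`(B ∖ {π(e)}) ∪ {e}` is again a base of `M`. -/
theorem brualdi_exchange {α : Type*} [DecidableEq α] [Fintype α]
    (M : FinMatroid α) (B B' : Finset α)
    (hB : M.IsBase B) (hB' : M.IsBase B') :
    ∃ π : {x // x ∈ B'} → {x // x ∈ B}, Function.Bijective π ∧
      ∀ e : {x // x ∈ B'}, M.IsBase (insert (e : α) (B.erase ((π e : α)))) := by
  classical
  set t : {x // x ∈ B'} → Finset α := fun e => M.nbr B e.val with ht
  have hall : ∀ s : Finset {x // x ∈ B'}, s.card ≤ (s.biUnion t).card := by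
    intro s
    set S : Finset α := s.image Subtype.val with hS
    have hScard : S.card = s.card :=
      Finset.card_image_of_injective s Subtype.val_injective
    have hSsub : S ⊆ B' := by
      intro x hx
      obtain ⟨e, _, rfl⟩ := Finset.mem_image.mp hx
      exact e.2
    have hSindep : M.Indep S := M.subset_indep hB'.1 hSsub
    set T : Finset α := s.biUnion t with hT
    have hTsub : T ⊆ B := by
      intro x hx
      obtain ⟨e, _, hx⟩ := Finset.mem_biUnion.mp hx
      exact FinMatroid.nbr_subset hx
    have hTindep : M.Indep T := M.subset_indep hB.1 hTsub
    have hspans : ∀ x ∈ S, M.Spans T x := by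
      intro x hx
      obtain ⟨e, hes, rfl⟩ := Finset.mem_image.mp hx
      have hsingle : M.Indep {e.val} :=
        M.subset_indep hB'.1 (Finset.singleton_subset_iff.mpr e.2)
      exact FinMatroid.spans_mono (Finset.subset_biUnion_of_mem t hes)
        (FinMatroid.spans_nbr hB hsingle)
    have := FinMatroid.card_le_of_spans hSindep hTindep hspans
    omega
  obtain ⟨f, hfinj, hf⟩ :=
    (Finset.all_card_le_biUnion_card_iff_existsInjective' t).mp hall
  have hfB : ∀ e, f e ∈ B := fun e => FinMatroid.nbr_subset (hf e)
  refine ⟨fun e => ⟨f e, hfB e⟩, ?_, ?_⟩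
  · rw [Fintype.bijective_iff_injective_and_card]
    constructor
    · intro a b hab
      exact hfinj (congrArg Subtype.val hab)
    · rw [Fintype.card_coe, Fintype.card_coe]
      exact FinMatroid.base_card_eq hB' hB
  · intro e
    have h1 := hf e
    rw [ht] at h1
    simp only [FinMatroid.nbr, Finset.mem_filter] at h1
    exact h1.2
end
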